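/- arXiv:math/0501295 — 7 statements merged into one kernel-verified Lean document; each statement's English description precedes it below -/
import Mathlib

section
/- There is a universal constant K > 0 with the following property. Let θ ∈ ℝ² be a unit vector and let v, v' ∈ ℝ² be vectors with v×θ ≠ 0, v·θ ≠ 0 and v×v' ≠ 0, and define λ(t) := −log((v·θ)²e^{−t} + (v×θ)²e^{t}) for t ∈ ℝ. Then λ attains a unique maximum, at the point T = log|v·θ| − log|v×θ| with maximal value M = −log|v·θ| − log|v×θ| − log 2; moreover, if v·θ ≥ |v|/√2, v'·θ ≥ |v'|/√2, v·v' ≥ |v||v'|/√2 (i.e. each of the angles between v and θ, v' and θ, v and v' is at most π/4) and |v'×θ|·|v|/|v×v'| ≤ 1/2, then |T − log(|v||v'|/|v×v'|)| ≤ K and |M − log(|v'|/(|v||v×v'|))| ≤ K. -/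
open Pointwise

noncomputable section

/-- Cross product of two vectors in ℝ²: `(a,b) × (c,d) = a d − b c`. -/
def crossP (u v : ℝ × ℝ) : ℝ := u.1 * v.2 - u.2 * v.1

/-- Euclidean inner product on ℝ². -/
def dotP (u v : ℝ × ℝ) : ℝ := u.1 * v.1 + u.2 * v.2

/-- Euclidean norm on ℝ². -/
def nrm (u : ℝ × ℝ) : ℝ := Real.sqrt (u.1 ^ 2 + u.2 ^ 2)

/-- `lam θ v t = −log |g_t^θ v|² = −log((v·θ)² e^{−t} + (v×θ)² e^{t})`. -/
def lam (θ v : ℝ × ℝ) (t : ℝ) : ℝ :=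
  -Real.log ((dotP v θ) ^ 2 * Real.exp (-t) + (crossP v θ) ^ 2 * Real.exp t)

/-- The critical time `T = log|v·θ| − log|v×θ|`. -/
def Tcrit (θ v : ℝ × ℝ) : ℝ := Real.log |dotP v θ| - Real.log |crossP v θ|

/-- The critical value `M = −log|v·θ| − log|v×θ| − log 2`. -/
def Mcrit (θ v : ℝ × ℝ) : ℝ := -Real.log |dotP v θ| - Real.log |crossP v θ| - Real.log 2

/-!
With `a = v·θ`, `b = v×θ` and `T = log|a| − log|b|` one has
`a² e^{−t} + b² e^{t} = 2|a||b| cosh (t − T)`, so `λ(t) = M − log cosh (t − T)`, which peaks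
exactly at `T` with value `M`.

For the estimates, `|θ| = 1` gives `v×v' = (v'·θ)(v×θ) − (v·θ)(v'×θ)`. The angle conditions give
`|v|/2 ≤ v·θ ≤ |v|` and `|v'|/2 ≤ v'·θ`, and the last hypothesis bounds the second term by
`|v×v'|/2`; hence `|v×v'|/2 ≤ |v'||v×θ| ≤ 3|v×v'|`. Taking logarithms, both `T` and `M` are
within `log 6` of the claimed values.
-/

open Real

theorem sq_mul_exp_neg_add_sq_mul_exp {a b : ℝ} (ha : a ≠ 0) (hb : b ≠ 0) (t : ℝ) :
    a ^ 2 * exp (-t) + b ^ 2 * exp t = 2 * (|a| * |b|) * cosh (t - (log |a| - log |b|)) := by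
  have hT : exp (log |a| - log |b|) = |a| / |b| := by
    rw [exp_sub, exp_log (abs_pos.2 ha), exp_log (abs_pos.2 hb)]
  have ha' : |a| ≠ 0 := abs_ne_zero.2 ha
  have hb' : |b| ≠ 0 := abs_ne_zero.2 hb
  rw [cosh_eq, neg_sub, exp_sub t, exp_sub _ t, hT, exp_neg, ← sq_abs a, ← sq_abs b]
  field_simp
  ring

section Peak

variable {θ v : ℝ × ℝ}

theorem lam_eq_Mcrit_sub_log_cosh (ha : dotP v θ ≠ 0) (hb : crossP v θ ≠ 0) (t : ℝ) :
    lam θ v t = Mcrit θ v - log (cosh (t - Tcrit θ v)) := by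
  rw [lam, sq_mul_exp_neg_add_sq_mul_exp ha hb, Mcrit, Tcrit,
    log_mul (by positivity) (cosh_pos _).ne', log_mul two_ne_zero (by positivity),
    log_mul (abs_ne_zero.2 ha) (abs_ne_zero.2 hb)]
  ring

theorem lam_Tcrit (ha : dotP v θ ≠ 0) (hb : crossP v θ ≠ 0) : lam θ v (Tcrit θ v) = Mcrit θ v := by
  rw [lam_eq_Mcrit_sub_log_cosh ha hb, sub_self, cosh_zero, log_one, sub_zero]

theorem lam_lt_lam_Tcrit (ha : dotP v θ ≠ 0) (hb : crossP v θ ≠ 0) {t : ℝ} (ht : t ≠ Tcrit θ v) :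
    lam θ v t < lam θ v (Tcrit θ v) := by
  rw [lam_Tcrit ha hb, lam_eq_Mcrit_sub_log_cosh ha hb]
  exact sub_lt_self _ (log_pos (one_lt_cosh.2 (sub_ne_zero.2 ht)))

end Peak

section UnitVector

variable {θ : ℝ × ℝ} (hθ : nrm θ = 1)
include hθ

theorem fst_sq_add_snd_sq_of_nrm_eq_one : θ.1 ^ 2 + θ.2 ^ 2 = 1 := by
  rw [← sqrt_eq_one, ← hθ, nrm]

theorem dotP_sq_add_crossP_sq (v : ℝ × ℝ) : dotP v θ ^ 2 + crossP v θ ^ 2 = v.1 ^ 2 + v.2 ^ 2 := by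
  unfold dotP crossP
  linear_combination (v.1 ^ 2 + v.2 ^ 2) * fst_sq_add_snd_sq_of_nrm_eq_one hθ

theorem abs_dotP_le_nrm (v : ℝ × ℝ) : |dotP v θ| ≤ nrm v :=
  abs_le_sqrt (by nlinarith [dotP_sq_add_crossP_sq hθ v, sq_nonneg (crossP v θ)])

theorem abs_crossP_le_nrm (v : ℝ × ℝ) : |crossP v θ| ≤ nrm v :=
  abs_le_sqrt (by nlinarith [dotP_sq_add_crossP_sq hθ v, sq_nonneg (dotP v θ)])

theorem crossP_eq_dotP_mul_crossP_sub (v v' : ℝ × ℝ) :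
    crossP v v' = dotP v' θ * crossP v θ - dotP v θ * crossP v' θ := by
  unfold crossP dotP
  linear_combination (v.2 * v'.1 - v.1 * v'.2) * fst_sq_add_snd_sq_of_nrm_eq_one hθ

end UnitVector

theorem le_two_mul_of_div_sqrt_two_le {x y : ℝ} (hx : 0 ≤ x) (h : x / √2 ≤ y) : x ≤ 2 * y := by
  have hy : 0 ≤ y := (div_nonneg hx (sqrt_nonneg 2)).trans h
  have hs : √2 ≤ 2 := by rw [sqrt_le_left zero_le_two]; norm_num
  calc x ≤ √2 * y := (div_le_iff₀' (by positivity)).1 h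
    _ ≤ 2 * y := mul_le_mul_of_nonneg_right hs hy

theorem log_le_log_add_log_of_le_mul {x c y : ℝ} (hx : 0 < x) (hc : 0 < c) (h : x ≤ c * y) :
    log x ≤ log c + log y := by
  have hy : 0 < y := pos_of_mul_pos_right (hx.trans_le h) hc.le
  rw [← log_mul hc.ne' hy.ne']
  exact log_le_log hx h

section Estimates

variable {θ v v' : ℝ × ℝ} (hθ : nrm θ = 1)
include hθ

theorem abs_dotP_mul_abs_crossP_le (hc : crossP v v' ≠ 0)
    (h : |crossP v' θ| * nrm v / |crossP v v'| ≤ 1 / 2) :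
    |dotP v θ| * |crossP v' θ| ≤ |crossP v v'| / 2 := by
  rw [div_le_iff₀ (abs_pos.2 hc)] at h
  nlinarith [abs_dotP_le_nrm hθ v, abs_nonneg (crossP v' θ)]

variable (hsmall : |dotP v θ| * |crossP v' θ| ≤ |crossP v v'| / 2)
include hsmall

theorem abs_crossP_le_two_mul_nrm_mul_abs_crossP :
    |crossP v v'| ≤ 2 * (nrm v' * |crossP v θ|) := by
  have htri := abs_sub (dotP v' θ * crossP v θ) (dotP v θ * crossP v' θ)
  rw [← crossP_eq_dotP_mul_crossP_sub hθ, abs_mul, abs_mul] at htri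
  have := mul_le_mul_of_nonneg_right (abs_dotP_le_nrm hθ v') (abs_nonneg (crossP v θ))
  linarith

theorem nrm_mul_abs_crossP_le_three_mul (hv' : nrm v' ≤ 2 * dotP v' θ) :
    nrm v' * |crossP v θ| ≤ 3 * |crossP v v'| := by
  have hsplit : dotP v' θ * crossP v θ = crossP v v' + dotP v θ * crossP v' θ := by
    linear_combination -crossP_eq_dotP_mul_crossP_sub hθ v v'
  have htri := abs_add_le (crossP v v') (dotP v θ * crossP v' θ)
  rw [← hsplit, abs_mul, abs_mul] at htri
  have hb := abs_nonneg (crossP v θ)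
  nlinarith [mul_le_mul_of_nonneg_right (le_abs_self (dotP v' θ)) hb]

end Estimates

theorem abs_Tcrit_sub_le_and_abs_Mcrit_sub_le {θ v v' : ℝ × ℝ} (hθ : nrm θ = 1)
    (hb : crossP v θ ≠ 0) (hc : crossP v v' ≠ 0)
    (hv : nrm v / √2 ≤ dotP v θ) (hv' : nrm v' / √2 ≤ dotP v' θ)
    (h : |crossP v' θ| * nrm v / |crossP v v'| ≤ 1 / 2) :
    |Tcrit θ v - log (nrm v * nrm v' / |crossP v v'|)| ≤ log 6 ∧
      |Mcrit θ v - log (nrm v' / (nrm v * |crossP v v'|))| ≤ log 6 := by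
  have hsmall := abs_dotP_mul_abs_crossP_le hθ hc h
  have pb : 0 < |crossP v θ| := abs_pos.2 hb
  have pc : 0 < |crossP v v'| := abs_pos.2 hc
  have pv : 0 < nrm v := pb.trans_le (abs_crossP_le_nrm hθ v)
  have pa : 0 < |dotP v θ| := (div_pos pv (by positivity)).trans_le (hv.trans (le_abs_self _))
  have hlow := abs_crossP_le_two_mul_nrm_mul_abs_crossP hθ hsmall
  have pv' : 0 < nrm v' :=
    pos_of_mul_pos_left (pos_of_mul_pos_right (pc.trans_le hlow) zero_le_two) pb.le
  have hup := nrm_mul_abs_crossP_le_three_mul hθ hsmall (le_two_mul_of_div_sqrt_two_le pv'.le hv')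
  have la : log |dotP v θ| ≤ log (nrm v) := log_le_log pa (abs_dotP_le_nrm hθ v)
  have lv : log (nrm v) ≤ log 2 + log |dotP v θ| :=
    log_le_log_add_log_of_le_mul pv two_pos
      ((le_two_mul_of_div_sqrt_two_le pv.le hv).trans (by gcongr; exact le_abs_self _))
  have lc : log |crossP v v'| ≤ log 2 + (log (nrm v') + log |crossP v θ|) := by
    rw [← log_mul pv'.ne' pb.ne']; exact log_le_log_add_log_of_le_mul pc two_pos hlow
  have lb : log (nrm v') + log |crossP v θ| ≤ log 3 + log |crossP v v'| := by
    rw [← log_mul pv'.ne' pb.ne']; exact log_le_log_add_log_of_le_mul (by positivity) three_pos hup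
  have l6 : log 6 = log 2 + log 3 := by rw [← log_mul two_ne_zero three_ne_zero]; norm_num
  have l2 : 0 ≤ log 2 := log_nonneg one_le_two
  have l3 : 0 ≤ log 3 := log_nonneg (by norm_num)
  rw [log_div (by positivity) pc.ne', log_mul pv.ne' pv'.ne', log_div pv'.ne' (by positivity),
    log_mul pv.ne' pc.ne', Tcrit, Mcrit, abs_le, abs_le]
  refine ⟨⟨?_, ?_⟩, ?_, ?_⟩ <;> linarith

/-- Lemma "Peak".  The function `λ(t) = −log|g_t^θ v|²` has a unique
maximum at `(T, M)`, and under the angle hypotheses the estimates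
`T = log(|v||v'|/|v×v'|) + O(1)` and `M = log(|v'|/(|v||v×v'|)) + O(1)` hold,
with a universal implied constant. -/
theorem slowly_divergent_peak :
    ∃ K : ℝ, 0 < K ∧
      ∀ θ v v' : ℝ × ℝ, nrm θ = 1 →
        crossP v θ ≠ 0 → dotP v θ ≠ 0 → crossP v v' ≠ 0 →
        ((∀ t : ℝ, t ≠ Tcrit θ v → lam θ v t < lam θ v (Tcrit θ v)) ∧
         lam θ v (Tcrit θ v) = Mcrit θ v ∧
         (nrm v / Real.sqrt 2 ≤ dotP v θ →
          nrm v' / Real.sqrt 2 ≤ dotP v' θ →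
          nrm v * nrm v' / Real.sqrt 2 ≤ dotP v v' →
          |crossP v' θ| * nrm v / |crossP v v'| ≤ 1 / 2 →
          |Tcrit θ v - Real.log (nrm v * nrm v' / |crossP v v'|)| ≤ K ∧
          |Mcrit θ v - Real.log (nrm v' / (nrm v * |crossP v v'|))| ≤ K)) :=
  ⟨log 6, log_pos (by norm_num), fun _ _ _ hθ hb ha hc =>
    ⟨fun _ ht => lam_lt_lam_Tcrit ha hb ht, lam_Tcrit ha hb,
      fun hv hv' _ h => abs_Tcrit_sub_le_and_abs_Mcrit_sub_le hθ hb hc hv hv' h⟩⟩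
end
end

section
/- There is a universal constant K > 0 with the following property. Let θ ∈ ℝ² be a unit vector and let v, v' ∈ ℝ² satisfy v×θ ≠ 0, v·θ ≠ 0, v'×θ ≠ 0, v'·θ ≠ 0. If |v| < |v'|, |v'×θ| ≤ |v×θ|/√2 and |v'·θ| ≥ √2|v·θ|, then there exists a unique t ∈ ℝ with |g_t^θ v| = |g_t^θ v'|; this t is positive, and setting m := −log|g_t^θ v'|², one has |t − log(|v'|²/|v×v'|)| ≤ K and |m − log(1/|v×v'|)| ≤ K. -/
open Pointwise

noncomputable section

/-- `gnorm θ t u = |g_t^θ u| = sqrt((u·θ)² e^{−t} + (u×θ)² e^{t})`. -/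
def gnorm (θ : ℝ × ℝ) (t : ℝ) (u : ℝ × ℝ) : ℝ :=
  Real.sqrt ((dotP u θ) ^ 2 * Real.exp (-t) + (crossP u θ) ^ 2 * Real.exp t)

lemma gnorm_sq (θ : ℝ × ℝ) (t : ℝ) (u : ℝ × ℝ) :
    gnorm θ t u ^ 2 = (dotP u θ) ^ 2 * Real.exp (-t) + (crossP u θ) ^ 2 * Real.exp t := by
  unfold gnorm
  exact Real.sq_sqrt (by positivity)

lemma gnorm_eq_iff (θ u w : ℝ × ℝ) (t : ℝ) :
    gnorm θ t u = gnorm θ t w ↔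
      (dotP u θ) ^ 2 * Real.exp (-t) + (crossP u θ) ^ 2 * Real.exp t =
      (dotP w θ) ^ 2 * Real.exp (-t) + (crossP w θ) ^ 2 * Real.exp t := by
  unfold gnorm
  exact Real.sqrt_inj (by positivity) (by positivity)

lemma abs_log_div_le' (x y : ℝ) (hx : 0 < x) (hy : 0 < y)
    (h1 : x ≤ 8 * y) (h2 : y ≤ 8 * x) : |Real.log (x / y)| ≤ Real.log 8 := by
  have hxy : 0 < x / y := div_pos hx hy
  rw [abs_le]
  constructor
  · have h8 : (8:ℝ)⁻¹ ≤ x / y := by rw [le_div_iff₀ hy]; nlinarith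
    calc -Real.log 8 = Real.log 8⁻¹ := (Real.log_inv 8).symm
      _ ≤ Real.log (x/y) := Real.log_le_log (by norm_num) h8
  · exact Real.log_le_log hxy (by rw [div_le_iff₀ hy]; nlinarith)

lemma le_of_sq_le' (x y : ℝ) (hx : 0 ≤ x) (hy : 0 ≤ y) (h : x ^ 2 ≤ y ^ 2) : x ≤ y := by
  nlinarith [h, hx, hy]

lemma sq_hyp (s x y : ℝ) (hspos : 0 < s) (hs2 : s ^ 2 = 2) (h : s * |x| ≤ |y|) :
    2 * x ^ 2 ≤ y ^ 2 := by
  have h1 := mul_le_mul h h (by positivity) (abs_nonneg y)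
  have e1 : s * |x| * (s * |x|) = 2 * x ^ 2 := by
    rw [show s * |x| * (s * |x|) = s ^ 2 * |x| ^ 2 by ring, hs2, sq_abs]
  have e2 : |y| * |y| = y ^ 2 := by rw [← sq_abs]; ring
  linarith [h1, e1, e2]

lemma valley_pos (s a b a' b' : ℝ) (hspos : 0 < s) (hs2 : s ^ 2 = 2)
    (ha : a ≠ 0) (hb : b ≠ 0)
    (hca : s * |a| ≤ |a'|) (hsb : s * |b'| ≤ |b|)
    (hlt : a ^ 2 + b ^ 2 < a' ^ 2 + b' ^ 2) :
    0 < a' ^ 2 - a ^ 2 ∧ 0 < b ^ 2 - b' ^ 2 ∧ b ^ 2 - b' ^ 2 < a' ^ 2 - a ^ 2 := by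
  have h2a := sq_hyp s a a' hspos hs2 hca
  have h2b := sq_hyp s b' b hspos hs2 hsb
  have ha2 : 0 < a ^ 2 := lt_of_le_of_ne (sq_nonneg a) (Ne.symm (pow_ne_zero 2 ha))
  have hb2 : 0 < b ^ 2 := lt_of_le_of_ne (sq_nonneg b) (Ne.symm (pow_ne_zero 2 hb))
  refine ⟨by linarith, by linarith, by linarith⟩

lemma valley_est (s a b a' b' E : ℝ)
    (hspos : 0 < s) (hs2 : s ^ 2 = 2)
    (ha : a ≠ 0) (hb : b ≠ 0) (ha' : a' ≠ 0)
    (hca : s * |a| ≤ |a'|) (hsb : s * |b'| ≤ |b|)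
    (hlt : a ^ 2 + b ^ 2 < a' ^ 2 + b' ^ 2)
    (hEpos : 0 < E)
    (hBE : (b ^ 2 - b' ^ 2) * E ^ 2 = a' ^ 2 - a ^ 2) :
    0 < |b * a' - a * b'| ∧
    E * |b * a' - a * b'| ≤ 8 * (a' ^ 2 + b' ^ 2) ∧
    a' ^ 2 + b' ^ 2 ≤ 8 * (E * |b * a' - a * b'|) ∧
    |b * a' - a * b'| * E ≤ 8 * (a' ^ 2 + b' ^ 2 * E ^ 2) ∧
    a' ^ 2 + b' ^ 2 * E ^ 2 ≤ 8 * (|b * a' - a * b'| * E) := by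
  have h2a := sq_hyp s a a' hspos hs2 hca
  have h2b := sq_hyp s b' b hspos hs2 hsb
  have ha2 : 0 < a ^ 2 := lt_of_le_of_ne (sq_nonneg a) (Ne.symm (pow_ne_zero 2 ha))
  have hb2 : 0 < b ^ 2 := lt_of_le_of_ne (sq_nonneg b) (Ne.symm (pow_ne_zero 2 hb))
  have ha'2 : 0 < a' ^ 2 := lt_of_le_of_ne (sq_nonneg a') (Ne.symm (pow_ne_zero 2 ha'))
  -- |a||b'| vs |a'||b|
  have habs2 : 2 * (|a| * |b'|) ≤ |a'| * |b| := by
    apply le_of_sq_le' _ _ (by positivity) (by positivity)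
    have e1 : (2 * (|a| * |b'|)) ^ 2 = 4 * (a ^ 2 * b' ^ 2) := by
      rw [show (2 * (|a| * |b'|)) ^ 2 = 4 * (|a| ^ 2 * |b'| ^ 2) by ring, sq_abs, sq_abs]
    have e2 : (|a'| * |b|) ^ 2 = a' ^ 2 * b ^ 2 := by
      rw [mul_pow, sq_abs, sq_abs]
    rw [e1, e2]
    linarith [mul_le_mul h2a h2b (by positivity) (sq_nonneg a')]
  -- cross product bounds
  have hclb := abs_sub_abs_le_abs_sub (b * a') (a * b')
  have hcub : |b * a' - a * b'| ≤ |b * a'| + |a * b'| := abs_sub (b * a') (a * b')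
  rw [abs_mul, abs_mul] at hclb hcub
  have hba' : 0 < |b| * |a'| := mul_pos (abs_pos.mpr hb) (abs_pos.mpr ha')
  have hc_lb : 1 / 2 * (|a'| * |b|) ≤ |b * a' - a * b'| := by linarith [hclb, habs2]
  have hc_ub : |b * a' - a * b'| ≤ 3 / 2 * (|a'| * |b|) := by linarith [hcub, habs2]
  have hcpos : 0 < |b * a' - a * b'| := by nlinarith [hc_lb, hba']
  -- E*|b| bounds
  have hEub2 : E ^ 2 * b ^ 2 ≤ 2 * a' ^ 2 := by
    linarith [hBE, mul_nonneg (by linarith : (0:ℝ) ≤ b ^ 2 - 2 * b' ^ 2) (sq_nonneg E),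
      sq_nonneg a]
  have hElb2 : a' ^ 2 ≤ 2 * (E ^ 2 * b ^ 2) := by
    linarith [hBE, h2a, mul_nonneg (sq_nonneg b') (sq_nonneg E)]
  have hEb_ub : E * |b| ≤ 3 / 2 * |a'| := by
    apply le_of_sq_le' _ _ (by positivity) (by positivity)
    have e1 : (E * |b|) ^ 2 = E ^ 2 * b ^ 2 := by rw [mul_pow, sq_abs]
    have e2 : (3 / 2 * |a'|) ^ 2 = 9 / 4 * a' ^ 2 := by rw [mul_pow, sq_abs]; norm_num
    rw [e1, e2]; linarith
  have hEb_lb : 2 / 3 * |a'| ≤ E * |b| := by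
    apply le_of_sq_le' _ _ (by positivity) (by positivity)
    have e1 : (E * |b|) ^ 2 = E ^ 2 * b ^ 2 := by rw [mul_pow, sq_abs]
    have e2 : (2 / 3 * |a'|) ^ 2 = 4 / 9 * a' ^ 2 := by rw [mul_pow, sq_abs]; norm_num
    rw [e1, e2]; linarith
  have hb'a' : b' ^ 2 ≤ a' ^ 2 := by linarith
  -- core products
  have g_ub : E * |b * a' - a * b'| ≤ 9 / 4 * a' ^ 2 := by
    have st1 : E * |b * a' - a * b'| ≤ E * (3 / 2 * (|a'| * |b|)) :=
      mul_le_mul_of_nonneg_left hc_ub hEpos.le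
    have st2 : 3 / 2 * |a'| * (E * |b|) ≤ 3 / 2 * |a'| * (3 / 2 * |a'|) :=
      mul_le_mul_of_nonneg_left hEb_ub (by positivity)
    linarith [st1, st2, sq_abs a']
  have g_lb : a' ^ 2 ≤ 3 * (E * |b * a' - a * b'|) := by
    have st1 : E * (1 / 2 * (|a'| * |b|)) ≤ E * |b * a' - a * b'| :=
      mul_le_mul_of_nonneg_left hc_lb hEpos.le
    have st2 : 1 / 2 * |a'| * (2 / 3 * |a'|) ≤ 1 / 2 * |a'| * (E * |b|) :=
      mul_le_mul_of_nonneg_left hEb_lb (by positivity)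
    linarith [st1, st2, sq_abs a']
  have hb'E : b' ^ 2 * E ^ 2 ≤ a' ^ 2 := by
    linarith [hEub2, mul_nonneg (by linarith : (0:ℝ) ≤ b ^ 2 - 2 * b' ^ 2) (sq_nonneg E)]
  have hEc : 0 ≤ E * |b * a' - a * b'| := mul_nonneg hEpos.le (abs_nonneg _)
  refine ⟨hcpos, ?_, ?_, ?_, ?_⟩
  · linarith [g_ub, sq_nonneg b', sq_nonneg a']
  · linarith [g_lb, hb'a', hEc]
  · linarith [g_ub, mul_nonneg (sq_nonneg b') (sq_nonneg E), sq_nonneg a']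
  · linarith [g_lb, hb'E, hEc]

set_option maxHeartbeats 1000000 in
/-- Lemma "Valley".  Under the stated hypotheses there is a unique time
`t` at which `|g_t^θ v| = |g_t^θ v'|`; it is positive and, together with
`m := −log|g_t^θ v'|²`, satisfies `t = log(|v'|²/|v×v'|) + O(1)` and
`m = log(1/|v×v'|) + O(1)` with a universal implied constant. -/
theorem slowly_divergent_valley :
    ∃ K : ℝ, 0 < K ∧
      ∀ θ v v' : ℝ × ℝ, nrm θ = 1 →
        crossP v θ ≠ 0 → dotP v θ ≠ 0 → crossP v' θ ≠ 0 → dotP v' θ ≠ 0 →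
        nrm v < nrm v' →
        |crossP v' θ| ≤ |crossP v θ| / Real.sqrt 2 →
        Real.sqrt 2 * |dotP v θ| ≤ |dotP v' θ| →
        ∃ t : ℝ, gnorm θ t v = gnorm θ t v' ∧
          (∀ s : ℝ, gnorm θ s v = gnorm θ s v' → s = t) ∧
          0 < t ∧
          |t - Real.log (nrm v' ^ 2 / |crossP v v'|)| ≤ K ∧
          |(-Real.log ((gnorm θ t v') ^ 2)) - Real.log (1 / |crossP v v'|)| ≤ K := by
  refine ⟨Real.log 8, Real.log_pos (by norm_num), ?_⟩
  intro θ v v' hθ hbne hane hbne' hane' hnrm hcb hca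
  simp only [gnorm_eq_iff, gnorm_sq]
  set a := dotP v θ with ha_def
  set b := crossP v θ with hb_def
  set a' := dotP v' θ with ha'_def
  set b' := crossP v' θ with hb'_def
  -- unit vector
  have hθ2 : θ.1 ^ 2 + θ.2 ^ 2 = 1 := by
    have h := hθ
    unfold nrm at h
    have h2 := Real.sq_sqrt (show (0:ℝ) ≤ θ.1 ^ 2 + θ.2 ^ 2 by positivity)
    rw [h] at h2
    linarith [h2]
  -- Lagrange identities
  have hvsq : nrm v ^ 2 = v.1 ^ 2 + v.2 ^ 2 := by
    unfold nrm; exact Real.sq_sqrt (by positivity)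
  have hv'sq : nrm v' ^ 2 = v'.1 ^ 2 + v'.2 ^ 2 := by
    unfold nrm; exact Real.sq_sqrt (by positivity)
  have hLv : a ^ 2 + b ^ 2 = nrm v ^ 2 := by
    rw [hvsq, ha_def, hb_def]; unfold dotP crossP
    linear_combination (v.1 ^ 2 + v.2 ^ 2) * hθ2
  have hLv' : a' ^ 2 + b' ^ 2 = nrm v' ^ 2 := by
    rw [hv'sq, ha'_def, hb'_def]; unfold dotP crossP
    linear_combination (v'.1 ^ 2 + v'.2 ^ 2) * hθ2
  have hcc : crossP v v' = b * a' - a * b' := by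
    rw [ha_def, hb_def, ha'_def, hb'_def]; unfold dotP crossP
    linear_combination (v.2 * v'.1 - v.1 * v'.2) * hθ2
  -- sqrt 2 facts
  set s := Real.sqrt 2 with hs_def
  have hspos : 0 < s := Real.sqrt_pos.mpr (by norm_num)
  have hs2 : s ^ 2 = 2 := Real.sq_sqrt (by norm_num)
  have hsb : s * |b'| ≤ |b| := by
    have h := (le_div_iff₀ hspos).mp hcb
    rw [mul_comm]; exact h
  have hnrm2 : a ^ 2 + b ^ 2 < a' ^ 2 + b' ^ 2 := by
    have h0 : 0 ≤ nrm v := by unfold nrm; positivity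
    have h1 : nrm v ^ 2 < nrm v' ^ 2 := pow_lt_pow_left₀ hnrm h0 two_ne_zero
    rw [← hLv, ← hLv'] at h1
    exact h1
  obtain ⟨hApos, hBpos, hABlt⟩ := valley_pos s a b a' b' hspos hs2 hane hbne hca hsb hnrm2
  -- E and t
  have hABpos : 0 < (a' ^ 2 - a ^ 2) / (b ^ 2 - b' ^ 2) := div_pos hApos hBpos
  set E := Real.sqrt ((a' ^ 2 - a ^ 2) / (b ^ 2 - b' ^ 2)) with hE_def
  have hEpos : 0 < E := Real.sqrt_pos.mpr hABpos
  have hE2 : E ^ 2 = (a' ^ 2 - a ^ 2) / (b ^ 2 - b' ^ 2) := Real.sq_sqrt hABpos.le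
  have hBE : (b ^ 2 - b' ^ 2) * E ^ 2 = a' ^ 2 - a ^ 2 := by
    rw [hE2]; field_simp
  have hexp : Real.exp (Real.log E) = E := Real.exp_log hEpos
  have hexpn : Real.exp (-(Real.log E)) = E⁻¹ := by rw [Real.exp_neg, hexp]
  obtain ⟨hcpos0, bd1, bd2, bd3, bd4⟩ :=
    valley_est s a b a' b' E hspos hs2 hane hbne hane' hca hsb hnrm2 hEpos hBE
  have hcpos : 0 < |crossP v v'| := by rw [hcc]; exact hcpos0
  refine ⟨Real.log E, ?_, ?_, ?_, ?_, ?_⟩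
  · -- equality at t
    rw [hexp, hexpn]
    field_simp
    linear_combination hBE
  · -- uniqueness
    intro s0 hs0
    have hE0 : Real.exp (-s0) = (Real.exp s0)⁻¹ := Real.exp_neg s0
    rw [hE0] at hs0
    have hp := Real.exp_pos s0
    have hkey : (b ^ 2 - b' ^ 2) * (Real.exp s0) ^ 2 = a' ^ 2 - a ^ 2 := by
      field_simp at hs0
      linear_combination hs0
    have hsq : (Real.exp s0) ^ 2 = E ^ 2 :=
      mul_left_cancel₀ (ne_of_gt hBpos) (hkey.trans hBE.symm)
    have h3 : Real.exp s0 = E := by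
      have h4 := congrArg Real.sqrt hsq
      rwa [Real.sqrt_sq hp.le, Real.sqrt_sq hEpos.le] at h4
    rw [← Real.log_exp s0, h3]
  · -- positivity of t
    apply Real.log_pos
    rw [hE_def, ← Real.sqrt_one]
    exact Real.sqrt_lt_sqrt (by norm_num) ((one_lt_div hBpos).mpr hABlt)
  · -- t bound
    have hNpos : 0 < nrm v' ^ 2 := by rw [← hLv']; positivity
    have bound1 : E * |crossP v v'| ≤ 8 * (nrm v' ^ 2) := by rw [← hLv', hcc]; exact bd1
    have bound2 : nrm v' ^ 2 ≤ 8 * (E * |crossP v v'|) := by rw [← hLv', hcc]; exact bd2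
    have heq : Real.log E - Real.log (nrm v' ^ 2 / |crossP v v'|) =
        Real.log ((E * |crossP v v'|) / nrm v' ^ 2) := by
      rw [Real.log_div (ne_of_gt hNpos) (ne_of_gt hcpos),
        Real.log_div (by positivity) (ne_of_gt hNpos),
        Real.log_mul (ne_of_gt hEpos) (ne_of_gt hcpos)]
      ring
    rw [heq]
    exact abs_log_div_le' _ _ (by positivity) hNpos bound1 bound2
  · -- m bound
    rw [hexp, hexpn]
    have hPpos : 0 < a' ^ 2 + b' ^ 2 * E ^ 2 := by positivity
    have bound3 : |crossP v v'| * E ≤ 8 * (a' ^ 2 + b' ^ 2 * E ^ 2) := by rw [hcc]; exact bd3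
    have bound4 : a' ^ 2 + b' ^ 2 * E ^ 2 ≤ 8 * (|crossP v v'| * E) := by rw [hcc]; exact bd4
    have hgval : a' ^ 2 * E⁻¹ + b' ^ 2 * E = (a' ^ 2 + b' ^ 2 * E ^ 2) / E := by
      field_simp
    have heq : -Real.log (a' ^ 2 * E⁻¹ + b' ^ 2 * E) - Real.log (1 / |crossP v v'|) =
        Real.log ((|crossP v v'| * E) / (a' ^ 2 + b' ^ 2 * E ^ 2)) := by
      rw [hgval, Real.log_div (ne_of_gt hPpos) (ne_of_gt hEpos),
        Real.log_div one_ne_zero (ne_of_gt hcpos),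
        Real.log_div (by positivity) (ne_of_gt hPpos),
        Real.log_mul (ne_of_gt hcpos) (ne_of_gt hEpos), Real.log_one]
      ring
    rw [heq]
    exact abs_log_div_le' _ _ (by positivity) hPpos bound3 bound4
end
end

section
/- Let Ω be a compact convex subset of the closed first quadrant {(x,y) : x ≥ 0, y ≥ 0} containing the points (0,0), (1,0) and (0,1) but not containing (1,1). Then the number of primitive integer vectors in 2Ω ∖ Ω exceeds (8/27)·area(2Ω ∖ Ω), i.e. dens(2Ω ∖ Ω) > 8/27. -/
/-!
Up to swapping the coordinates, `Ω` lies below the line `y = 2`: a point of `Ω` with `y ≥ 2` and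
one with `x ≥ 2` have a midpoint `m ≥ (1, 1)`, and `(1, 1)` is a convex combination of `m`,
`(1, 0)`, `(0, 1)`. Let `u` and `w` be the lengths of the rows of `Ω` at heights `1/2` and `1`;
then `u ≥ 1/2` and `w < 1`. The points `(p, 1)` with `1 ≤ p ≤ 2u`, and `(1, 2)` when `w ≥ 1/2`, are
primitive and lie in `2Ω ∖ Ω`. Row length is concave in the height, so the part of `Ω` in the strip
`0 ≤ y ≤ 1` has area at most `u`, and at height `y > 1` the row has length at most
`w - 2(u - w)(y - 1)`. As `area(2Ω ∖ Ω) = 3 area(Ω)`, an inequality in `u` and `w` remains.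
-/

open Pointwise

noncomputable section

/-- The set `Z` of primitive integer vectors. -/
def Zset : Set (ℝ × ℝ) := {v | ∃ p q : ℤ, Int.gcd p q = 1 ∧ v = ((p : ℝ), (q : ℝ))}

open MeasureTheory Set

lemma finite_Zset_inter {K : Set (ℝ × ℝ)} (hK : IsCompact K) : (Zset ∩ K).Finite := by
  set cast : ℤ × ℤ → ℝ × ℝ := Prod.map (↑) (↑)
  have hcast : Filter.Tendsto cast Filter.cofinite (Filter.cocompact (ℝ × ℝ)) := by
    simpa only [Filter.coprod_cofinite, Filter.coprod_cocompact] using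
      Int.tendsto_coe_cofinite.prodMap_coprod Int.tendsto_coe_cofinite
  refine ((tendsto_cofinite_cocompact_iff.1 hcast K hK).image cast).subset ?_
  rintro _ ⟨⟨p, q, -, rfl⟩, hK⟩
  exact ⟨(p, q), hK, rfl⟩

lemma preimage_swap_Zset : Prod.swap ⁻¹' Zset = Zset := by
  ext ⟨x, y⟩
  constructor <;> rintro ⟨p, q, h, hpq⟩ <;> exact ⟨q, p, by rwa [Int.gcd_comm], by simp_all⟩

lemma volume_preimage_swap (s : Set (ℝ × ℝ)) : volume (Prod.swap ⁻¹' s) = volume s := by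
  rw [Measure.volume_eq_prod]
  exact (Measure.measurePreserving_swap (μ := volume) (ν := volume)).measure_preimage_equiv
    (f := MeasurableEquiv.prodComm) s

lemma preimage_swap_smul (c : ℝ) (s : Set (ℝ × ℝ)) :
    Prod.swap ⁻¹' (c • s) = c • Prod.swap ⁻¹' s := by
  simp only [← image_swap_eq_preimage_swap]
  exact image_smul_set (LinearEquiv.prodComm ℝ ℝ ℝ) c s

lemma ncard_preimage_swap (s : Set (ℝ × ℝ)) : (Prod.swap ⁻¹' s).ncard = s.ncard :=
  Set.ncard_preimage_of_injective_subset_range Prod.swap_injective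
    (by simp [Prod.swap_surjective.range_eq])

/-- `(1, 1) = ((a, b) + (b - 1) • (1, 0) + (a - 1) • (0, 1)) / (a + b - 1)`. -/
lemma one_one_mem_of_one_le {Ω : Set (ℝ × ℝ)} (hconv : Convex ℝ Ω)
    (h10 : ((1 : ℝ), (0 : ℝ)) ∈ Ω) (h01 : ((0 : ℝ), (1 : ℝ)) ∈ Ω) {a b : ℝ} (hab : (a, b) ∈ Ω)
    (ha : 1 ≤ a) (hb : 1 ≤ b) : ((1 : ℝ), (1 : ℝ)) ∈ Ω := by
  have hd : 0 < a + b - 1 := by linarith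
  have := hconv.sum_mem (t := Finset.univ) (z := ![(a, b), (1, 0), (0, 1)])
    (w := ![1 / (a + b - 1), (b - 1) / (a + b - 1), (a - 1) / (a + b - 1)])
    (fun i _ ↦ by fin_cases i <;> exact div_nonneg (by linarith) hd.le)
    (by simp only [Fin.sum_univ_three, Matrix.cons_val]; field_simp; ring)
    (fun i _ ↦ by fin_cases i <;> assumption)
  convert this using 1
  simp only [Fin.sum_univ_three, Matrix.cons_val, Prod.smul_mk, smul_eq_mul, Prod.mk_add_mk]
  congr 1 <;> field_simp <;> ring

lemma forall_snd_lt_two_or_forall_fst_lt_two {Ω : Set (ℝ × ℝ)} (hconv : Convex ℝ Ω)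
    (hquad : Ω ⊆ {p : ℝ × ℝ | 0 ≤ p.1 ∧ 0 ≤ p.2})
    (h10 : ((1 : ℝ), (0 : ℝ)) ∈ Ω) (h01 : ((0 : ℝ), (1 : ℝ)) ∈ Ω)
    (h11 : ((1 : ℝ), (1 : ℝ)) ∉ Ω) : (∀ p ∈ Ω, p.2 < 2) ∨ (∀ p ∈ Ω, p.1 < 2) := by
  by_contra! ⟨⟨p, hp, hp2⟩, ⟨q, hq, hq1⟩⟩
  have hm := hconv hp hq (a := 1 / 2) (b := 1 / 2) (by norm_num) (by norm_num) (by norm_num)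
  refine h11 (one_one_mem_of_one_le hconv h10 h01 hm ?_ ?_)
  · simp only [Prod.smul_fst, smul_eq_mul]
    linarith [(hquad hp).1]
  · simp only [Prod.smul_snd, smul_eq_mul]
    linarith [(hquad hq).2]

lemma Convex.subset_two_smul {E : Type*} [AddCommGroup E] [Module ℝ E] {s : Set E}
    (hs : Convex ℝ s) (h0 : (0 : E) ∈ s) : s ⊆ (2 : ℝ) • s := fun x hx ↦
  ⟨(2⁻¹ : ℝ) • x, hs.smul_mem_of_zero_mem h0 hx ⟨by norm_num, by norm_num⟩, by
    simp [smul_smul]⟩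

lemma Convex.addHaar_real_two_smul_sdiff {E : Type*} [NormedAddCommGroup E] [NormedSpace ℝ E]
    [MeasurableSpace E] [BorelSpace E] [FiniteDimensional ℝ E] (μ : Measure E)
    [μ.IsAddHaarMeasure] {s : Set E} (hs : Convex ℝ s) (h0 : (0 : E) ∈ s) (hm : MeasurableSet s)
    (hfin : μ s ≠ ⊤) :
    μ.real ((2 : ℝ) • s \ s) = (2 ^ Module.finrank ℝ E - 1) * μ.real s := by
  have h2s : μ ((2 : ℝ) • s) ≠ ⊤ := by
    rw [Measure.addHaar_smul]
    exact ENNReal.mul_ne_top ENNReal.ofReal_ne_top hfin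
  rw [measureReal_sdiff (hs.subset_two_smul h0) hm h2s, measureReal_def,
    Measure.addHaar_smul, ENNReal.toReal_mul, ENNReal.toReal_ofReal (abs_nonneg _)]
  simp only [abs_pow, Nat.abs_ofNat, measureReal_def]
  ring

lemma volume_le_setLIntegral_of_mem_Icc {S : Set (ℝ × ℝ)} (hS : MeasurableSet S) {I : Set ℝ}
    (hI : MeasurableSet I) (f : ℝ → ℝ) (h : ∀ p ∈ S, p.2 ∈ I ∧ p.1 ∈ Icc 0 (f p.2)) :
    volume S ≤ ∫⁻ y in I, ENNReal.ofReal (f y) := by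
  rw [Measure.volume_eq_prod, Measure.prod_apply_symm hS, ← lintegral_indicator hI]
  refine lintegral_mono fun y ↦ ?_
  by_cases hy : y ∈ I
  · rw [indicator_of_mem hy, ← sub_zero (f y), ← Real.volume_Icc]
    exact measure_mono fun x hx ↦ (h _ hx).2
  · have : (fun x ↦ (x, y)) ⁻¹' S = ∅ := eq_empty_of_forall_notMem fun x hx ↦ hy (h _ hx).1
    simp [this]

lemma setLIntegral_Icc_le_of_add_reflect_le {a b : ℝ} {f : ℝ → ENNReal} {c : ENNReal}
    (h : ∀ y ∈ Icc a b, f y + f (a + b - y) ≤ 2 * c) :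
    ∫⁻ y in Icc a b, f y ≤ ENNReal.ofReal (b - a) * c := by
  have hreflect : ∫⁻ y in Icc a b, f (a + b - y) = ∫⁻ y in Icc a b, f y := by
    simpa using (Measure.measurePreserving_sub_left volume (a + b)).setLIntegral_comp_preimage_emb
      (MeasurableEquiv.subLeft (a + b)).measurableEmbedding f (Icc a b)
  refine (ENNReal.mul_le_mul_iff_right two_ne_zero ENNReal.ofNat_ne_top).1 ?_
  calc 2 * ∫⁻ y in Icc a b, f y
      = (∫⁻ y in Icc a b, f y) + ∫⁻ y in Icc a b, f (a + b - y) := by rw [hreflect, two_mul]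
    _ ≤ ∫⁻ y in Icc a b, (f y + f (a + b - y)) := le_lintegral_add _ _
    _ ≤ ∫⁻ _ in Icc a b, 2 * c := setLIntegral_mono_ae' measurableSet_Icc (.of_forall h)
    _ = 2 * (ENNReal.ofReal (b - a) * c) := by
      rw [setLIntegral_const, Real.volume_Icc]; ring

lemma setLIntegral_Ioc_ofReal_affine {s t a c : ℝ} (hst : s ≤ t) (ha : 0 ≤ a)
    (hat : 0 ≤ a - c * (t - s)) :
    ∫⁻ y in Ioc s t, ENNReal.ofReal (a - c * (y - s)) =
      ENNReal.ofReal ((t - s) * (a - c * (t - s) / 2)) := by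
  have hnonneg : ∀ y ∈ Ioc s t, 0 ≤ a - c * (y - s) := fun y ⟨hsy, hyt⟩ ↦ by nlinarith
  rw [← ofReal_integral_eq_lintegral_ofReal (by fun_prop : Continuous _).integrableOn_Ioc
    ((ae_restrict_iff' measurableSet_Ioc).2 (Filter.Eventually.of_forall hnonneg)),
    ← intervalIntegral.integral_of_le hst]
  congr 1
  rw [intervalIntegral.integral_sub intervalIntegrable_const
    (Continuous.intervalIntegrable (by fun_prop) _ _),
    intervalIntegral.integral_const_mul, intervalIntegral.integral_comp_sub_right (fun x ↦ x)]
  simp only [intervalIntegral.integral_const, smul_eq_mul, sub_self, integral_id, ne_eq,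
    OfNat.ofNat_ne_zero, not_false_eq_true, zero_pow, sub_zero]
  ring

/-- The right end of the row of `Ω` at height `t` (junk value `0` if that row is empty). -/
def rowSup (Ω : Set (ℝ × ℝ)) (t : ℝ) : ℝ := sSup {x | (x, t) ∈ Ω}

section rowSup

variable {Ω : Set (ℝ × ℝ)} {x t : ℝ}

lemma bddAbove_row (hcomp : IsCompact Ω) (t : ℝ) : BddAbove {x | (x, t) ∈ Ω} :=
  (hcomp.image continuous_fst).bddAbove.mono fun x (hx : (x, t) ∈ Ω) ↦
    (⟨(x, t), hx, rfl⟩ : x ∈ Prod.fst '' Ω)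

lemma le_rowSup (hcomp : IsCompact Ω) (h : (x, t) ∈ Ω) : x ≤ rowSup Ω t :=
  le_csSup (bddAbove_row hcomp t) h

lemma rowSup_mem (hcomp : IsCompact Ω) (h : (x, t) ∈ Ω) : (rowSup Ω t, t) ∈ Ω :=
  (hcomp.isClosed.preimage (Continuous.prodMk_left t)).csSup_mem (s := {x | (x, t) ∈ Ω})
    ⟨x, h⟩ (bddAbove_row hcomp t)

lemma convex_row (hconv : Convex ℝ Ω) (t : ℝ) : Convex ℝ {x | (x, t) ∈ Ω} :=
  fun x hx y hy a b ha hb hab ↦ by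
    simpa [← add_mul, hab] using hconv hx hy ha hb hab

lemma mk_mem_of_le_rowSup (hcomp : IsCompact Ω) (hconv : Convex ℝ Ω) (h : (x, t) ∈ Ω) {y : ℝ}
    (hxy : x ≤ y) (hy : y ≤ rowSup Ω t) : (y, t) ∈ Ω :=
  (convex_row hconv t).ordConnected.out h (rowSup_mem hcomp h) ⟨hxy, hy⟩

lemma concaveOn_rowSup (hcomp : IsCompact Ω) (hconv : Convex ℝ Ω) :
    ConcaveOn ℝ (Prod.snd '' Ω) (rowSup Ω) := by
  refine ⟨hconv.linear_image (LinearMap.snd ℝ ℝ ℝ), ?_⟩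
  rintro _ ⟨⟨x, s⟩, hs, rfl⟩ _ ⟨⟨y, t⟩, ht, rfl⟩ a b ha hb hab
  have := hconv (rowSup_mem hcomp hs) (rowSup_mem hcomp ht) ha hb hab
  exact le_rowSup hcomp (by simpa using this)

end rowSup

/-- With `u`, `w` the row lengths at heights `1/2` and `1`, this is `∫ max 0 (w - 2(u - w)(y - 1))`
over `1 < y < 2`; in the first case the integrand vanishes from `y = 1 + w / (2(u - w)) < 2` on. -/
def capArea (u w : ℝ) : ℝ := if 3 * w < 2 * u then w ^ 2 / (4 * (u - w)) else 2 * w - u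

lemma capArea_nonneg {u w : ℝ} (hw : 0 ≤ w) : 0 ≤ capArea u w := by
  unfold capArea
  split_ifs with h
  · exact div_nonneg (sq_nonneg w) (by linarith)
  · linarith

section Body

variable {Ω : Set (ℝ × ℝ)}

lemma zero_mk_mem (hconv : Convex ℝ Ω) (h00 : ((0 : ℝ), (0 : ℝ)) ∈ Ω)
    (h01 : ((0 : ℝ), (1 : ℝ)) ∈ Ω) {t : ℝ} (ht : t ∈ Icc (0 : ℝ) 1) : ((0 : ℝ), t) ∈ Ω := by
  simpa using hconv h00 h01 (sub_nonneg.2 ht.2) ht.1 (sub_add_cancel 1 t)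

lemma rowSup_add_rowSup_one_sub_le (hcomp : IsCompact Ω) (hconv : Convex ℝ Ω)
    (h00 : ((0 : ℝ), (0 : ℝ)) ∈ Ω) (h01 : ((0 : ℝ), (1 : ℝ)) ∈ Ω) {y : ℝ}
    (hy : y ∈ Icc (0 : ℝ) 1) : rowSup Ω y + rowSup Ω (1 - y) ≤ 2 * rowSup Ω (1 / 2) := by
  have hy' : 1 - y ∈ Icc (0 : ℝ) 1 := ⟨by linarith [hy.2], by linarith [hy.1]⟩
  have := (concaveOn_rowSup hcomp hconv).2 ⟨_, zero_mk_mem hconv h00 h01 hy, rfl⟩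
    ⟨_, zero_mk_mem hconv h00 h01 hy', rfl⟩ one_half_pos.le one_half_pos.le (add_halves 1)
  rw [smul_eq_mul, smul_eq_mul, smul_eq_mul, smul_eq_mul,
    show (1 / 2 : ℝ) * y + 1 / 2 * (1 - y) = 1 / 2 by ring] at this
  linarith

lemma volume_inter_snd_le_one_le (hcomp : IsCompact Ω) (hconv : Convex ℝ Ω)
    (hquad : Ω ⊆ {p : ℝ × ℝ | 0 ≤ p.1 ∧ 0 ≤ p.2}) (h00 : ((0 : ℝ), (0 : ℝ)) ∈ Ω)
    (h01 : ((0 : ℝ), (1 : ℝ)) ∈ Ω) :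
    volume (Ω ∩ {p | p.2 ≤ 1}) ≤ ENNReal.ofReal (rowSup Ω (1 / 2)) := by
  have hnonneg {t : ℝ} (ht : t ∈ Icc (0 : ℝ) 1) : 0 ≤ rowSup Ω t :=
    le_rowSup hcomp (zero_mk_mem hconv h00 h01 ht)
  calc volume (Ω ∩ {p | p.2 ≤ 1})
      ≤ ∫⁻ y in Icc 0 1, ENNReal.ofReal (rowSup Ω y) :=
        volume_le_setLIntegral_of_mem_Icc (hcomp.measurableSet.inter
          (measurableSet_le measurable_snd measurable_const)) measurableSet_Icc _
          fun p ⟨hp, hp1⟩ ↦ ⟨⟨(hquad hp).2, hp1⟩, (hquad hp).1, le_rowSup hcomp hp⟩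
    _ ≤ ENNReal.ofReal (1 - 0) * ENNReal.ofReal (rowSup Ω (1 / 2)) := by
        refine setLIntegral_Icc_le_of_add_reflect_le fun y hy ↦ ?_
        have hy' : 1 - y ∈ Icc (0 : ℝ) 1 := ⟨by linarith [hy.2], by linarith [hy.1]⟩
        rw [zero_add, ← ENNReal.ofReal_add (hnonneg hy) (hnonneg hy'), ← ENNReal.ofReal_ofNat 2,
          ← ENNReal.ofReal_mul zero_le_two]
        exact ENNReal.ofReal_le_ofReal (rowSup_add_rowSup_one_sub_le hcomp hconv h00 h01 hy)
    _ = ENNReal.ofReal (rowSup Ω (1 / 2)) := by simp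

lemma fst_le_of_one_lt_snd (hcomp : IsCompact Ω) (hconv : Convex ℝ Ω)
    (h00 : ((0 : ℝ), (0 : ℝ)) ∈ Ω) (h01 : ((0 : ℝ), (1 : ℝ)) ∈ Ω) {x y : ℝ} (h : (x, y) ∈ Ω)
    (hy : 1 < y) :
    x ≤ rowSup Ω 1 - 2 * (rowSup Ω (1 / 2) - rowSup Ω 1) * (y - 1) := by
  have hd : 0 < 2 * y - 1 := by linarith
  -- height `1` is the combination of heights `y` and `1/2` with weights `1 : 2y - 2`
  have hconc := (concaveOn_rowSup hcomp hconv).2 ⟨_, h, rfl⟩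
    ⟨_, zero_mk_mem hconv h00 h01 (t := 1 / 2) ⟨by norm_num, by norm_num⟩, rfl⟩
    (div_nonneg zero_le_one hd.le) (div_nonneg (by linarith : (0 : ℝ) ≤ 2 * y - 2) hd.le)
    (by field_simp; ring)
  rw [smul_eq_mul, smul_eq_mul, smul_eq_mul, smul_eq_mul,
    show 1 / (2 * y - 1) * y + (2 * y - 2) / (2 * y - 1) * (1 / 2) = 1 by field_simp; ring,
    div_mul_eq_mul_div, div_mul_eq_mul_div, ← add_div, div_le_iff₀ hd] at hconc
  dsimp only at hconc
  nlinarith [le_rowSup hcomp h]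

lemma volume_inter_lt_snd_le_of_fst_le {s τ a c : ℝ} (hΩ : MeasurableSet Ω)
    (hquad : Ω ⊆ {p : ℝ × ℝ | 0 ≤ p.1 ∧ 0 ≤ p.2})
    (hslice : ∀ p ∈ Ω, s < p.2 → p.1 ≤ a - c * (p.2 - s)) (htop : ∀ p ∈ Ω, s < p.2 → p.2 ≤ τ)
    (hsτ : s ≤ τ) (ha : 0 ≤ a) (hτ : 0 ≤ a - c * (τ - s)) :
    volume (Ω ∩ {p | s < p.2}) ≤ ENNReal.ofReal ((τ - s) * (a - c * (τ - s) / 2)) :=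
  calc volume (Ω ∩ {p | s < p.2})
      ≤ ∫⁻ y in Ioc s τ, ENNReal.ofReal (a - c * (y - s)) :=
        volume_le_setLIntegral_of_mem_Icc (hΩ.inter (measurableSet_lt measurable_const
          measurable_snd)) measurableSet_Ioc _ fun p ⟨hp, hps⟩ ↦
            ⟨⟨hps, htop p hp hps⟩, (hquad hp).1, hslice p hp hps⟩
    _ = _ := setLIntegral_Ioc_ofReal_affine hsτ ha hτ

lemma volume_inter_one_lt_snd_le (hcomp : IsCompact Ω) (hconv : Convex ℝ Ω)
    (hquad : Ω ⊆ {p : ℝ × ℝ | 0 ≤ p.1 ∧ 0 ≤ p.2}) (h00 : ((0 : ℝ), (0 : ℝ)) ∈ Ω)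
    (h01 : ((0 : ℝ), (1 : ℝ)) ∈ Ω) (hh : ∀ p ∈ Ω, p.2 < 2) :
    volume (Ω ∩ {p | 1 < p.2}) ≤ ENNReal.ofReal (capArea (rowSup Ω (1 / 2)) (rowSup Ω 1)) := by
  have hslice (p) (hp : p ∈ Ω) (hp1 : 1 < p.2) :=
    fst_le_of_one_lt_snd hcomp hconv h00 h01 (x := p.1) (y := p.2) hp hp1
  have hw := le_rowSup hcomp h01
  generalize rowSup Ω (1 / 2) = u at *
  generalize rowSup Ω 1 = w at *
  unfold capArea
  split_ifs with hreg
  · have huw : 0 < 2 * (u - w) := by linarith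
    have huw' : u - w ≠ 0 := by linarith
    have htop (p) (hp : p ∈ Ω) (hp1 : 1 < p.2) : p.2 ≤ 1 + w / (2 * (u - w)) := by
      rw [← sub_le_iff_le_add', le_div_iff₀ huw]
      linarith [(hquad hp).1.trans (hslice p hp hp1)]
    convert volume_inter_lt_snd_le_of_fst_le hcomp.measurableSet hquad hslice htop
      (le_add_of_nonneg_right (by positivity)) hw (by field_simp; linarith) using 2
    field_simp
    ring
  · convert volume_inter_lt_snd_le_of_fst_le hcomp.measurableSet hquad hslice
      (fun p hp _ ↦ (hh p hp).le) one_le_two hw (by linarith) using 2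
    ring

lemma measureReal_le_add_capArea (hcomp : IsCompact Ω) (hconv : Convex ℝ Ω)
    (hquad : Ω ⊆ {p : ℝ × ℝ | 0 ≤ p.1 ∧ 0 ≤ p.2}) (h00 : ((0 : ℝ), (0 : ℝ)) ∈ Ω)
    (h01 : ((0 : ℝ), (1 : ℝ)) ∈ Ω) (hh : ∀ p ∈ Ω, p.2 < 2) :
    volume.real Ω ≤ rowSup Ω (1 / 2) + capArea (rowSup Ω (1 / 2)) (rowSup Ω 1) := by
  have hu : 0 ≤ rowSup Ω (1 / 2) :=
    le_rowSup hcomp (zero_mk_mem hconv h00 h01 ⟨by norm_num, by norm_num⟩)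
  have hcap := capArea_nonneg (u := rowSup Ω (1 / 2)) (le_rowSup hcomp h01)
  refine ENNReal.toReal_le_of_le_ofReal (by positivity) ?_
  calc volume Ω ≤ volume (Ω ∩ {p | p.2 ≤ 1} ∪ Ω ∩ {p | 1 < p.2}) :=
        measure_mono fun p hp ↦ (le_or_gt p.2 1).imp (⟨hp, ·⟩) (⟨hp, ·⟩)
    _ ≤ volume (Ω ∩ {p | p.2 ≤ 1}) + volume (Ω ∩ {p | 1 < p.2}) := measure_union_le _ _
    _ ≤ _ := by
      rw [ENNReal.ofReal_add hu hcap]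
      exact add_le_add (volume_inter_snd_le_one_le hcomp hconv hquad h00 h01)
        (volume_inter_one_lt_snd_le hcomp hconv hquad h00 h01 hh)

lemma mk_one_mem_two_smul_sdiff (hcomp : IsCompact Ω) (hconv : Convex ℝ Ω)
    (h00 : ((0 : ℝ), (0 : ℝ)) ∈ Ω) (h01 : ((0 : ℝ), (1 : ℝ)) ∈ Ω) (hw : rowSup Ω 1 < 1)
    {p : ℝ} (hp1 : 1 ≤ p) (hp : p ≤ 2 * rowSup Ω (1 / 2)) : (p, (1 : ℝ)) ∈ (2 : ℝ) • Ω \ Ω := by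
  have hhalf : (p / 2, (1 / 2 : ℝ)) ∈ Ω :=
    mk_mem_of_le_rowSup hcomp hconv (zero_mk_mem hconv h00 h01 ⟨by norm_num, by norm_num⟩)
      (by positivity) (by linarith)
  refine ⟨⟨_, hhalf, by simp [mul_div_cancel₀]⟩, fun hmem ↦ ?_⟩
  linarith [le_rowSup hcomp hmem]

lemma one_two_mem_two_smul_sdiff (hcomp : IsCompact Ω) (hconv : Convex ℝ Ω)
    (h01 : ((0 : ℝ), (1 : ℝ)) ∈ Ω) (hh : ∀ p ∈ Ω, p.2 < 2) (hw : 1 / 2 ≤ rowSup Ω 1) :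
    ((1 : ℝ), (2 : ℝ)) ∈ (2 : ℝ) • Ω \ Ω :=
  ⟨⟨(1 / 2, 1), mk_mem_of_le_rowSup hcomp hconv h01 (by norm_num) hw, by norm_num⟩,
    fun hmem ↦ (hh _ hmem).false⟩

end Body

section Counting

variable {D : Set (ℝ × ℝ)} {n : ℕ}

lemma ncard_mk_one_Icc (n : ℕ) :
    ((fun p : ℕ ↦ ((p : ℝ), (1 : ℝ))) '' Icc 1 n).ncard = n := by
  rw [Set.ncard_image_of_injective _ fun a b h ↦ by simpa using h, ← Finset.coe_Icc,
    Set.ncard_coe_finset, Nat.card_Icc, Nat.add_sub_cancel]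

lemma mk_one_subset_Zset_inter (h : ∀ p : ℕ, 1 ≤ p → p ≤ n → ((p : ℝ), (1 : ℝ)) ∈ D) :
    (fun p : ℕ ↦ ((p : ℝ), (1 : ℝ))) '' Icc 1 n ⊆ Zset ∩ D := by
  rintro _ ⟨p, ⟨hp1, hpn⟩, rfl⟩
  exact ⟨⟨p, 1, by simp, by simp⟩, h p hp1 hpn⟩

lemma le_ncard_Zset_inter (hD : (Zset ∩ D).Finite)
    (h : ∀ p : ℕ, 1 ≤ p → p ≤ n → ((p : ℝ), (1 : ℝ)) ∈ D) : n ≤ (Zset ∩ D).ncard :=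
  ncard_mk_one_Icc n ▸ Set.ncard_le_ncard (mk_one_subset_Zset_inter h) hD

lemma succ_le_ncard_Zset_inter (hD : (Zset ∩ D).Finite)
    (h : ∀ p : ℕ, 1 ≤ p → p ≤ n → ((p : ℝ), (1 : ℝ)) ∈ D) (h12 : ((1 : ℝ), (2 : ℝ)) ∈ D) :
    n + 1 ≤ (Zset ∩ D).ncard := by
  have h12S : ((1 : ℝ), (2 : ℝ)) ∉ (fun p : ℕ ↦ ((p : ℝ), (1 : ℝ))) '' Icc 1 n := by
    rintro ⟨p, -, hp⟩
    norm_num at hp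
  rw [← ncard_mk_one_Icc n, ← Set.ncard_insert_of_notMem h12S (Set.toFinite _)]
  exact Set.ncard_le_ncard (insert_subset ⟨⟨1, 2, by simp, by simp⟩, h12⟩
    (mk_one_subset_Zset_inter h)) hD

end Counting

/-- Equality is approached as `u → 1`, `w → 1/2` with `N = 1`: this is where `8/27` comes from. -/
lemma eight_mul_lt_nine_mul {u w A : ℝ} {N : ℕ} (hu : 1 / 2 ≤ u) (hw0 : 0 ≤ w) (hw1 : w < 1)
    (hN : ⌊2 * u⌋₊ ≤ N) (hNw : 1 / 2 ≤ w → ⌊2 * u⌋₊ + 1 ≤ N) (hA : A ≤ u + capArea u w) :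
    8 * A < 9 * N := by
  have hfloor : 2 * u < ⌊2 * u⌋₊ + 1 := Nat.lt_floor_add_one _
  have hfloor1 : (1 : ℝ) ≤ ⌊2 * u⌋₊ := by exact_mod_cast Nat.le_floor (by push_cast; linarith)
  have hN' : (⌊2 * u⌋₊ : ℝ) ≤ N := by exact_mod_cast hN
  have hNw' : 1 / 2 ≤ w → (⌊2 * u⌋₊ : ℝ) + 1 ≤ N := fun h ↦ by exact_mod_cast hNw h
  unfold capArea at hA
  split_ifs at hA with hreg
  · have huw : 0 < u - w := by linarith
    have hcap : w ^ 2 / (4 * (u - w)) * (4 * (u - w)) = w ^ 2 := div_mul_cancel₀ _ (by positivity)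
    rcases le_or_gt (1 / 2) w with hw | hw
    · nlinarith [hNw' hw]
    rcases le_or_gt 1 u with hu1 | hu1
    · nlinarith
    · nlinarith [mul_nonneg (sub_nonneg.2 hu1.le) huw.le]
  · rcases le_or_gt (1 / 2) w with hw | hw
    · linarith [hNw' hw]
    · linarith

theorem primitive_density_gt_of_snd_lt_two {Ω : Set (ℝ × ℝ)} (hcomp : IsCompact Ω)
    (hconv : Convex ℝ Ω) (hquad : Ω ⊆ {p : ℝ × ℝ | 0 ≤ p.1 ∧ 0 ≤ p.2})
    (h00 : ((0 : ℝ), (0 : ℝ)) ∈ Ω) (h10 : ((1 : ℝ), (0 : ℝ)) ∈ Ω)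
    (h01 : ((0 : ℝ), (1 : ℝ)) ∈ Ω) (h11 : ((1 : ℝ), (1 : ℝ)) ∉ Ω) (hh : ∀ p ∈ Ω, p.2 < 2) :
    (8 / 27 : ℝ) * (volume ((2 : ℝ) • Ω \ Ω)).toReal <
      ((Zset ∩ ((2 : ℝ) • Ω \ Ω)).ncard : ℝ) := by
  have hu : 1 / 2 ≤ rowSup Ω (1 / 2) := le_rowSup hcomp (x := 1 / 2) (by
    simpa [midpoint_eq_smul_add] using hconv.midpoint_mem h10 h01)
  have hw1 : rowSup Ω 1 < 1 := lt_of_not_ge fun hw ↦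
    h11 (one_one_mem_of_one_le hconv h10 h01 (rowSup_mem hcomp h01) hw le_rfl)
  have hfin : (Zset ∩ ((2 : ℝ) • Ω \ Ω)).Finite :=
    (finite_Zset_inter (hcomp.smul (2 : ℝ))).subset (inter_subset_inter_right _ sdiff_subset)
  have hrow (p : ℕ) (hp1 : 1 ≤ p) (hp : p ≤ ⌊2 * rowSup Ω (1 / 2)⌋₊) :
      ((p : ℝ), (1 : ℝ)) ∈ (2 : ℝ) • Ω \ Ω :=
    mk_one_mem_two_smul_sdiff hcomp hconv h00 h01 hw1 (by exact_mod_cast hp1)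
      ((Nat.cast_le.2 hp).trans (Nat.floor_le (by positivity)))
  have key := eight_mul_lt_nine_mul hu (le_rowSup hcomp h01) hw1 (le_ncard_Zset_inter hfin hrow)
    (fun hw ↦ succ_le_ncard_Zset_inter hfin hrow (one_two_mem_two_smul_sdiff hcomp hconv h01 hh hw))
    (measureReal_le_add_capArea hcomp hconv hquad h00 h01 hh)
  have hdim : (2 : ℝ) ^ Module.finrank ℝ (ℝ × ℝ) - 1 = 3 := by norm_num
  rw [← measureReal_def, Convex.addHaar_real_two_smul_sdiff volume hconv h00
    hcomp.measurableSet hcomp.measure_lt_top.ne, hdim]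
  linarith

/-- Lemma "8/27".  If `Ω` is a compact convex subset of the first
quadrant containing `(0,0)`, `(1,0)`, `(0,1)` but not `(1,1)`, then the number of
primitive integer vectors in `2Ω ∖ Ω` exceeds `(8/27)·area(2Ω ∖ Ω)`. -/
theorem slowly_divergent_density_8_27
    (Ω : Set (ℝ × ℝ)) (hcomp : IsCompact Ω) (hconv : Convex ℝ Ω)
    (hquad : Ω ⊆ {p : ℝ × ℝ | 0 ≤ p.1 ∧ 0 ≤ p.2})
    (h00 : ((0 : ℝ), (0 : ℝ)) ∈ Ω) (h10 : ((1 : ℝ), (0 : ℝ)) ∈ Ω)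
    (h01 : ((0 : ℝ), (1 : ℝ)) ∈ Ω) (h11 : ((1 : ℝ), (1 : ℝ)) ∉ Ω) :
    (8 / 27 : ℝ) * (MeasureTheory.volume (((2 : ℝ) • Ω) \ Ω)).toReal <
      ((Zset ∩ (((2 : ℝ) • Ω) \ Ω)).ncard : ℝ) := by
  rcases forall_snd_lt_two_or_forall_fst_lt_two hconv hquad h10 h01 h11 with hh | hw
  · exact primitive_density_gt_of_snd_lt_two hcomp hconv hquad h00 h10 h01 h11 hh
  · have h := primitive_density_gt_of_snd_lt_two (Ω := Prod.swap ⁻¹' Ω)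
      ((Homeomorph.prodComm ℝ ℝ).isCompact_preimage.2 hcomp)
      (hconv.linear_preimage (LinearEquiv.prodComm ℝ ℝ ℝ).toLinearMap)
      (fun p hp ↦ (hquad hp).symm) h00 h01 h10 h11 (fun p hp ↦ hw _ hp)
    rwa [← preimage_swap_smul, ← preimage_sdiff, volume_preimage_swap, ← preimage_swap_Zset,
      ← preimage_inter, ncard_preimage_swap] at h
end
end

section
/- Let w = (w₁,w₂) ∈ ℝ² with w₂ > 0 and α := w₁/w₂ irrational, and let φ be the angle w makes with the positive y-axis, so cos φ = w₂/|w|. If v ∈ ℤ² is primitive (gcd of its coordinates is 1), |v|·cos φ > 1, and |w×v|/|w| ≤ 1/(2|v|), then v or −v is a continued fraction convergent vector (p_k,q_k) of α. -/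
open Pointwise

noncomputable section

/-- The `k`-th continued fraction convergent vector `(p_k, q_k)` of `α`. -/
def convVec (α : ℝ) (k : ℕ) : ℝ × ℝ :=
  ((GenContFract.of α).nums k, (GenContFract.of α).dens k)


lemma vscc_not_term {ξ : ℝ} (hirr : Irrational ξ) (n : ℕ) :
    ¬(GenContFract.of ξ).TerminatedAt n := by
  intro h
  obtain ⟨q, hq⟩ := (GenContFract.terminates_iff_rat ξ).mp ⟨n, h⟩
  exact hirr ⟨q, hq.symm⟩

lemma vscc_int_contsAux {ξ : ℝ} (hirr : Irrational ξ) :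
    ∀ n : ℕ, ∃ a b : ℤ, (GenContFract.of ξ).contsAux n = ⟨(a : ℝ), (b : ℝ)⟩ := by
  have key : ∀ n : ℕ, (∃ a b : ℤ, (GenContFract.of ξ).contsAux n = ⟨(a:ℝ),(b:ℝ)⟩) ∧
      (∃ a b : ℤ, (GenContFract.of ξ).contsAux (n+1) = ⟨(a:ℝ),(b:ℝ)⟩) := by
    intro n
    induction n with
    | zero =>
      refine ⟨⟨1, 0, ?_⟩, ⟨⌊ξ⌋, 1, ?_⟩⟩
      · simpa using GenContFract.zeroth_contAux_eq_one_zero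
      · rw [GenContFract.first_contAux_eq_h_one, GenContFract.of_h_eq_floor]; simp
    | succ n ih =>
      obtain ⟨⟨a, b, hab⟩, ⟨a', b', hab'⟩⟩ := ih
      refine ⟨⟨a', b', hab'⟩, ?_⟩
      have hnt := vscc_not_term hirr n
      obtain ⟨gp, hgp⟩ := Option.ne_none_iff_exists'.mp hnt
      obtain ⟨hgpa, z, hgpb⟩ := GenContFract.of_partNum_eq_one_and_exists_int_partDen_eq hgp
      refine ⟨z * a' + a, z * b' + b, ?_⟩
      rw [GenContFract.contsAux_recurrence hgp hab hab', hgpa, hgpb]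
      push_cast
      simp [one_mul]
  exact fun n => (key n).1

lemma vscc_numden {ξ : ℝ} (hirr : Irrational ξ) (n : ℕ) :
    ∃ a b : ℤ, 0 < b ∧ IsCoprime a b ∧
      (GenContFract.of ξ).nums n = (a : ℝ) ∧ (GenContFract.of ξ).dens n = (b : ℝ) := by
  obtain ⟨a, b, hab⟩ := vscc_int_contsAux hirr (n+1)
  obtain ⟨a', b', hab'⟩ := vscc_int_contsAux hirr (n+2)
  have hnum : (GenContFract.of ξ).nums n = (a : ℝ) := by
    rw [GenContFract.num_eq_conts_a, GenContFract.nth_cont_eq_succ_nth_contAux, hab]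
  have hden : (GenContFract.of ξ).dens n = (b : ℝ) := by
    rw [GenContFract.den_eq_conts_b, GenContFract.nth_cont_eq_succ_nth_contAux, hab]
  have hnum' : (GenContFract.of ξ).nums (n+1) = (a' : ℝ) := by
    rw [GenContFract.num_eq_conts_a, GenContFract.nth_cont_eq_succ_nth_contAux, hab']
  have hden' : (GenContFract.of ξ).dens (n+1) = (b' : ℝ) := by
    rw [GenContFract.den_eq_conts_b, GenContFract.nth_cont_eq_succ_nth_contAux, hab']
  have hfib : ((Nat.fib (n+1) : ℕ) : ℝ) ≤ (GenContFract.of ξ).dens n :=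
    GenContFract.succ_nth_fib_le_of_nth_den (Or.inr (vscc_not_term hirr _))
  have hb : 0 < b := by
    have h1 : (1:ℝ) ≤ ((Nat.fib (n+1) : ℕ) : ℝ) := by
      exact_mod_cast Nat.fib_pos.mpr n.succ_pos
    rw [hden] at hfib
    have : (0:ℝ) < (b:ℝ) := lt_of_lt_of_le zero_lt_one (le_trans h1 hfib)
    exact_mod_cast this
  have hcoe : ((SimpContFract.of ξ : SimpContFract ℝ) : GenContFract ℝ) = GenContFract.of ξ := rfl
  have hdet := SimpContFract.determinant (s := SimpContFract.of ξ) (n := n)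
    (by rw [hcoe]; exact vscc_not_term hirr n)
  rw [hcoe, hnum, hden, hnum', hden'] at hdet
  have hz : a * b' - b * a' = (-1)^(n+1) := by exact_mod_cast hdet
  have hcop : IsCoprime a b := by
    rcases Nat.even_or_odd (n+1) with he | ho
    · have h1 : a * b' - b * a' = 1 := by rw [hz, he.neg_one_pow]
      exact ⟨b', -a', by linarith⟩
    · have h1 : a * b' - b * a' = -1 := by rw [hz, ho.neg_one_pow]
      exact ⟨-b', a', by linarith⟩
  exact ⟨a, b, hb, hcop, hnum, hden⟩

lemma vscc_eq_convVec {ξ : ℝ} (hirr : Irrational ξ) {p q : ℤ} (hq : 0 < q)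
    (hcop : IsCoprime p q) {n : ℕ}
    (hc : (GenContFract.of ξ).convs n = (p : ℝ) / (q : ℝ)) :
    ((p:ℝ), (q:ℝ)) = convVec ξ n := by
  obtain ⟨a, b, hb, hab, hnum, hden⟩ := vscc_numden hirr n
  have hQ : (0:ℝ) < (q:ℝ) := by exact_mod_cast hq
  have hB : (0:ℝ) < (b:ℝ) := by exact_mod_cast hb
  rw [GenContFract.conv_eq_num_div_den, hnum, hden] at hc
  have hcr : (a:ℝ) * q = (p:ℝ) * b := by
    field_simp at hc
    linarith [hc]
  have hzz : a * q = p * b := by exact_mod_cast hcr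
  have h1 : b ∣ q := (hab.symm).dvd_of_dvd_mul_left ⟨p, by linarith⟩
  have h2 : q ∣ b := (hcop.symm).dvd_of_dvd_mul_left ⟨a, by linarith⟩
  have hbq : b = q := Int.dvd_antisymm hb.le hq.le h1 h2
  have hap : a = p := by
    have h3 : a * q = p * q := by rw [hzz, hbq]
    exact mul_right_cancel₀ hq.ne' h3
  rw [convVec, hnum, hden, hap, hbq]

lemma vscc_key {t Q S V : ℝ} (P : ℝ) (ht0 : 0 ≤ t) (hQ1 : 1 ≤ Q)
    (hS2 : S^2 = 1 + t^2) (hV2 : V^2 = P^2 + Q^2) (hSpos : 0 < S) (hVpos : 0 < V)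
    (hPt : t*Q - 1/2 < |P|) : S * (2*Q - 1) < 2 * V := by
  have hQ0 : 0 < Q := lt_of_lt_of_le zero_lt_one hQ1
  have hgoal2 : S^2 * (2*Q-1)^2 < (2*V)^2 := by
    have h2V2 : (2*V)^2 = 4 * (P^2 + Q^2) := by rw [mul_pow, hV2]; ring
    rw [hS2, h2V2]
    rcases le_or_gt (1/2) (t * Q) with hc | hc
    · have hP2 : (t*Q - 1/2)^2 < P^2 := by
        have h5 : 0 ≤ t*Q - 1/2 := by linarith
        have h6 : (t*Q - 1/2)^2 < |P|^2 := by nlinarith [abs_nonneg P]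
        rwa [sq_abs] at h6
      have hident : 4*((t*Q-1/2)^2+Q^2) - (1+t^2)*(2*Q-1)^2
          = 4*Q*(1-t+t^2) - t^2 := by ring
      have h0 : 0 < 1 - t + t^2 := by nlinarith [sq_nonneg (2*t-1)]
      have h5 : 4*(1-t+t^2) ≤ 4*Q*(1-t+t^2) := by nlinarith
      have h6 : t^2 < 4*(1-t+t^2) := by nlinarith [sq_nonneg (3*t-2)]
      nlinarith
    · have h7 : t^2*(2*Q-1)^2 ≤ t^2*(2*Q)^2 := by nlinarith [sq_nonneg t]
      have h8 : t^2*(2*Q)^2 < 1 := by nlinarith [mul_nonneg ht0 hQ0.le]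
      nlinarith [sq_nonneg P]
  have h2Q : 0 < 2 * Q - 1 := by linarith
  nlinarith [mul_pos hSpos h2Q, hVpos]

lemma vscc_ass {ξ S V : ℝ} {p : ℤ} {m : ℕ} (hm : 0 < m) (hg : Int.gcd p (m:ℤ) = 1)
    (hS2 : S^2 = 1 + ξ^2) (hV2 : V^2 = (p:ℝ)^2 + (m:ℝ)^2)
    (hSpos : 0 < S) (hVpos : 0 < V) (hSV : S < V)
    (hDb : |ξ * (m:ℝ) - (p:ℝ)| * (2 * V) ≤ S) :
    Real.ContfracLegendre.Ass ξ p m := by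
  have hQ1 : (1:ℝ) ≤ (m:ℝ) := by exact_mod_cast hm
  have hQ0 : (0:ℝ) < (m:ℝ) := lt_of_lt_of_le zero_lt_one hQ1
  have hD0 : 0 ≤ |ξ * (m:ℝ) - (p:ℝ)| := abs_nonneg _
  have hDhalf : |ξ * (m:ℝ) - (p:ℝ)| < 1 / 2 := by nlinarith
  have hPt : |ξ| * (m:ℝ) - 1/2 < |(p:ℝ)| := by
    have h3 : |ξ * (m:ℝ)| - |(p:ℝ)| ≤ |ξ * (m:ℝ) - (p:ℝ)| := abs_sub_abs_le_abs_sub _ _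
    have h4 : |ξ * (m:ℝ)| = |ξ| * (m:ℝ) := by rw [abs_mul, abs_of_pos hQ0]
    linarith
  have hkey : S * (2 * (m:ℝ) - 1) < 2 * V :=
    vscc_key (p:ℝ) (abs_nonneg ξ) hQ1 (by rw [hS2, sq_abs]) hV2 hSpos hVpos hPt
  have h2Q1 : (0:ℝ) < 2 * (m:ℝ) - 1 := by linarith
  have hDlt : |ξ * (m:ℝ) - (p:ℝ)| * (2 * (m:ℝ) - 1) < 1 := by
    have h9 : |ξ * (m:ℝ) - (p:ℝ)| * (2 * V) * (2 * (m:ℝ) - 1) ≤ S * (2 * (m:ℝ) - 1) :=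
      mul_le_mul_of_nonneg_right hDb h2Q1.le
    nlinarith
  refine ⟨Int.isCoprime_iff_gcd_eq_one.mpr hg, ?_, ?_⟩
  · intro hm1
    have hq1' : (m:ℝ) = 1 := by exact_mod_cast congrArg (fun z : ℤ => (z:ℝ)) hm1
    have hd1 : |ξ - (p:ℝ)| < 1/2 := by
      have he : ξ * (m:ℝ) - (p:ℝ) = ξ - (p:ℝ) := by rw [hq1']; ring
      rwa [he] at hDhalf
    have := (abs_lt.mp hd1).1
    linarith
  · have hcast : (((m:ℤ)):ℝ) = (m:ℝ) := by push_cast; ring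
    rw [hcast]
    have hfrac : ξ - (p:ℝ) / (m:ℝ) = (ξ * (m:ℝ) - (p:ℝ)) / (m:ℝ) := by field_simp
    rw [hfrac, abs_div, abs_of_pos hQ0, div_lt_iff₀ hQ0]
    have hrhs : ((m:ℝ) * (2 * (m:ℝ) - 1))⁻¹ * (m:ℝ) = (2*(m:ℝ)-1)⁻¹ := by
      field_simp
    rw [hrhs, inv_eq_one_div, lt_div_iff₀ h2Q1]
    exact hDlt

lemma vscc_main (w : ℝ × ℝ) (hw2 : 0 < w.2) (hirr : Irrational (w.1 / w.2))
    (p q : ℤ) (hq : 0 < q) (hg : Int.gcd p q = 1)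
    (hlen : 1 < nrm ((p:ℝ),(q:ℝ)) * (w.2 / nrm w))
    (hcross : |crossP w ((p:ℝ),(q:ℝ))| / nrm w ≤ 1 / (2 * nrm ((p:ℝ),(q:ℝ)))) :
    ∃ k : ℕ, ((p:ℝ),(q:ℝ)) = convVec (w.1 / w.2) k := by
  obtain ⟨m, rfl⟩ : ∃ m : ℕ, (m:ℤ) = q := ⟨q.toNat, Int.toNat_of_nonneg hq.le⟩
  have hm : 0 < m := by exact_mod_cast hq
  have hQcast : (((m:ℤ)):ℝ) = (m:ℝ) := by push_cast; ring
  rw [hQcast] at hlen hcross ⊢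
  have hQ1 : (1:ℝ) ≤ (m:ℝ) := by exact_mod_cast hm
  have hV2 : (nrm ((p:ℝ),(m:ℝ)))^2 = (p:ℝ)^2 + (m:ℝ)^2 := Real.sq_sqrt (by positivity)
  have hVpos : 0 < nrm ((p:ℝ),(m:ℝ)) := Real.sqrt_pos.mpr (by nlinarith)
  have hS2 : (Real.sqrt (1 + (w.1/w.2)^2))^2 = 1 + (w.1/w.2)^2 := Real.sq_sqrt (by positivity)
  have hSpos : 0 < Real.sqrt (1 + (w.1/w.2)^2) := Real.sqrt_pos.mpr (by positivity)
  have hW : nrm w = w.2 * Real.sqrt (1 + (w.1/w.2)^2) := by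
    rw [nrm]
    rw [show w.1^2 + w.2^2 = w.2^2 * (1 + (w.1/w.2)^2) by field_simp; ring]
    rw [Real.sqrt_mul (by positivity), Real.sqrt_sq hw2.le]
  have hWpos : 0 < nrm w := by rw [hW]; positivity
  have hSV : Real.sqrt (1 + (w.1/w.2)^2) < nrm ((p:ℝ),(m:ℝ)) := by
    rw [hW] at hlen
    have h1 : w.2 / (w.2 * Real.sqrt (1 + (w.1/w.2)^2))
        = 1 / Real.sqrt (1 + (w.1/w.2)^2) := by field_simp
    rw [h1, mul_one_div] at hlen
    exact (one_lt_div hSpos).mp hlen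
  have hDb : |(w.1/w.2) * (m:ℝ) - (p:ℝ)| * (2 * nrm ((p:ℝ),(m:ℝ)))
      ≤ Real.sqrt (1 + (w.1/w.2)^2) := by
    have h1 : |crossP w ((p:ℝ),(m:ℝ))| * (2 * nrm ((p:ℝ),(m:ℝ))) ≤ nrm w := by
      rw [div_le_div_iff₀ hWpos (by positivity)] at hcross
      linarith
    have h2 : crossP w ((p:ℝ),(m:ℝ)) = w.2 * ((w.1/w.2) * (m:ℝ) - (p:ℝ)) := by
      rw [crossP]; field_simp
    rw [h2, abs_mul, abs_of_pos hw2, hW] at h1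
    nlinarith [abs_nonneg ((w.1/w.2) * (m:ℝ) - (p:ℝ)),
      mul_nonneg (abs_nonneg ((w.1/w.2) * (m:ℝ) - (p:ℝ))) (by positivity : (0:ℝ) ≤ 2 * nrm ((p:ℝ),(m:ℝ)))]
  have hAss := vscc_ass hm hg hS2 hV2 hSpos hVpos hSV hDb
  obtain ⟨n, hn⟩ := Real.exists_rat_eq_convergent' hAss
  refine ⟨n, ?_⟩
  rw [← hQcast]
  refine vscc_eq_convVec hirr hq (Int.isCoprime_iff_gcd_eq_one.mpr hg) ?_
  rw [Real.convs_eq_convergent, ← hn]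
  push_cast
  ring

/-- Lemma "VSCC".  Let `w = (w₁,w₂)` with `w₂ > 0` and `α = w₁/w₂`
irrational, and let `φ` be the angle of `w` with the positive `y`-axis, so
`cos φ = w₂/|w|`.  If `v ∈ Z`, `|v| cos φ > 1` and `|w×v|/|w| ≤ 1/(2|v|)`, then
`±v` is a convergent vector of `α`. -/
theorem slowly_divergent_vscc
    (w : ℝ × ℝ) (hw2 : 0 < w.2) (hirr : Irrational (w.1 / w.2))
    (v : ℝ × ℝ) (hv : v ∈ Zset)
    (hlen : 1 < nrm v * (w.2 / nrm w))
    (hcross : |crossP w v| / nrm w ≤ 1 / (2 * nrm v)) :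
    ∃ k : ℕ, v = convVec (w.1 / w.2) k ∨ v = -convVec (w.1 / w.2) k := by
  obtain ⟨p, q, hg, rfl⟩ := hv
  rcases lt_trichotomy q 0 with hq | rfl | hq
  · -- q < 0 : apply the main lemma to (-p, -q)
    have hg' : Int.gcd (-p) (-q) = 1 := by
      simpa [Int.neg_gcd, Int.gcd_neg] using hg
    have hnrm : nrm ((((-p):ℤ):ℝ), (((-q):ℤ):ℝ)) = nrm ((p:ℝ),(q:ℝ)) := by
      unfold nrm
      push_cast
      ring_nf
    have hcr : |crossP w ((((-p):ℤ):ℝ), (((-q):ℤ):ℝ))| = |crossP w ((p:ℝ),(q:ℝ))| := by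
      unfold crossP
      push_cast
      rw [show w.1 * -(q:ℝ) - w.2 * -(p:ℝ) = -(w.1 * (q:ℝ) - w.2 * (p:ℝ)) by ring, abs_neg]
    obtain ⟨k, hk⟩ := vscc_main w hw2 hirr (-p) (-q) (by omega) hg'
      (by rw [hnrm]; exact hlen) (by rw [hcr, hnrm]; exact hcross)
    refine ⟨k, Or.inr ?_⟩
    have hneg : -((((-p):ℤ):ℝ), (((-q):ℤ):ℝ)) = ((p:ℝ),(q:ℝ)) := by
      push_cast
      simp
    rw [← hneg, hk]
  · -- q = 0 : contradiction
    exfalso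
    have hna : p.natAbs = 1 := by simpa [Int.gcd] using hg
    have hnv : nrm ((p:ℝ), ((0:ℤ):ℝ)) = 1 := by
      unfold nrm
      push_cast
      rw [show (p:ℝ)^2 + (0:ℝ)^2 = (p:ℝ)^2 by ring, Real.sqrt_sq_eq_abs, ← Int.cast_abs]
      rw [Int.abs_eq_natAbs, hna]
      norm_num
    have hcv : |crossP w ((p:ℝ), ((0:ℤ):ℝ))| = w.2 := by
      unfold crossP
      push_cast
      rw [show w.1 * 0 - w.2 * (p:ℝ) = -(w.2 * (p:ℝ)) by ring, abs_neg, abs_mul,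
        abs_of_pos hw2, ← Int.cast_abs, Int.abs_eq_natAbs, hna]
      norm_num
    rw [hnv] at hlen hcross
    rw [hcv] at hcross
    rw [one_mul] at hlen
    norm_num at hcross
    have hWpos : 0 < nrm w := by
      by_contra h
      push_neg at h
      have : w.2 / nrm w ≤ 0 := div_nonpos_of_nonneg_of_nonpos hw2.le h
      linarith
    rw [div_le_iff₀ hWpos] at hcross
    rw [lt_div_iff₀ hWpos] at hlen
    linarith
  · obtain ⟨k, hk⟩ := vscc_main w hw2 hirr p q hq hg hlen hcross
    exact ⟨k, Or.inl hk⟩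
end
end

section
/- Let (w_j)_{j≥0} be a sequence of nonzero vectors in ℝ² such that |w₀| ≥ 1, the sequence of Euclidean norms |w_j| is nondecreasing, w_j·w_{j+1} > 0 for all j, and the series Σ_{j≥0} |w_j×w_{j+1}| converges. Then the sequence of unit vectors w_j/|w_j| converges in ℝ². -/
open Pointwise

noncomputable section

/-- If `(w_j)` are nonzero vectors with `|w₀| ≥ 1`, nondecreasing
norms, `w_j·w_{j+1} > 0` and `Σ|w_j×w_{j+1}| < ∞`, then the unit vectors
`w_j/|w_j|` converge. -/
theorem slowly_divergent_directions_converge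
    (w : ℕ → ℝ × ℝ) (hne : ∀ j, w j ≠ 0) (h0 : 1 ≤ nrm (w 0))
    (hmono : ∀ j, nrm (w j) ≤ nrm (w (j + 1)))
    (hdot : ∀ j, 0 < dotP (w j) (w (j + 1)))
    (hsum : Summable fun j => |crossP (w j) (w (j + 1))|) :
    ∃ θ : ℝ × ℝ,
      Filter.Tendsto (fun j => (nrm (w j))⁻¹ • w j) Filter.atTop (nhds θ) := by
  set u : ℕ → ℝ × ℝ := fun j => (nrm (w j))⁻¹ • w j with hu
  have hr1 : ∀ j, 1 ≤ nrm (w j) := by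
    intro j; induction j with
    | zero => exact h0
    | succ n ih => exact ih.trans (hmono n)
  have hrpos : ∀ j, 0 < nrm (w j) := fun j => lt_of_lt_of_le one_pos (hr1 j)
  have hsq : ∀ j, ((w j).1) ^ 2 + ((w j).2) ^ 2 = (nrm (w j)) ^ 2 := by
    intro j
    rw [nrm, Real.sq_sqrt (by positivity)]
  have hu1 : ∀ j, (u j).1 = (nrm (w j))⁻¹ * (w j).1 := fun j => rfl
  have hu2 : ∀ j, (u j).2 = (nrm (w j))⁻¹ * (w j).2 := fun j => rfl
  have hunit : ∀ j, (u j).1 ^ 2 + (u j).2 ^ 2 = 1 := by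
    intro j
    have h : (u j).1 ^ 2 + (u j).2 ^ 2
        = ((nrm (w j))⁻¹) ^ 2 * (((w j).1) ^ 2 + ((w j).2) ^ 2) := by
      rw [hu1, hu2]; ring
    rw [h, hsq j]
    field_simp [(hrpos j).ne']
  -- key distance bound
  have hbound : ∀ j, dist (u j) (u (j + 1)) ≤
      Real.sqrt 2 * |crossP (w j) (w (j + 1))| := by
    intro j
    set r := nrm (w j) with hrdef
    set s := nrm (w (j + 1)) with hsdef
    have hcu : crossP (u j) (u (j + 1)) = (r⁻¹ * s⁻¹) * crossP (w j) (w (j + 1)) := by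
      simp only [crossP, hu1, hu2]; ring
    have hdu : dotP (u j) (u (j + 1)) = (r⁻¹ * s⁻¹) * dotP (w j) (w (j + 1)) := by
      simp only [dotP, hu1, hu2]; ring
    have hdupos : 0 < dotP (u j) (u (j + 1)) := by
      rw [hdu]
      exact mul_pos (mul_pos (inv_pos.2 (hrpos j)) (inv_pos.2 (hrpos (j + 1)))) (hdot j)
    set d := dotP (u j) (u (j + 1)) with hd
    set c := crossP (u j) (u (j + 1)) with hc
    -- Lagrange identity for unit vectors
    have hlag : d ^ 2 + c ^ 2 = 1 := by
      have h1 := hunit j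
      have h2 := hunit (j + 1)
      have : d ^ 2 + c ^ 2 = ((u j).1 ^ 2 + (u j).2 ^ 2) * ((u (j+1)).1 ^ 2 + (u (j+1)).2 ^ 2) := by
        simp only [hd, hc, dotP, crossP]; ring
      rw [this, h1, h2, one_mul]
    -- component differences squared bounded by 2 c^2
    have hkey : ((u j).1 - (u (j+1)).1) ^ 2 + ((u j).2 - (u (j+1)).2) ^ 2 ≤ 2 * c ^ 2 := by
      have hdle1 : d ≤ 1 := by nlinarith [sq_nonneg c]
      have hexp : ((u j).1 - (u (j+1)).1) ^ 2 + ((u j).2 - (u (j+1)).2) ^ 2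
          = 2 - 2 * d := by
        have h1 := hunit j
        have h2 := hunit (j + 1)
        simp only [hd, dotP]
        nlinarith [h1, h2]
      rw [hexp]
      nlinarith [hdupos, hdle1]
    have habs : ∀ x : ℝ, x ^ 2 ≤ 2 * c ^ 2 → |x| ≤ Real.sqrt 2 * |c| := by
      intro x hx
      have : |x| = Real.sqrt (x ^ 2) := (Real.sqrt_sq_eq_abs x).symm
      rw [this]
      calc Real.sqrt (x ^ 2) ≤ Real.sqrt (2 * c ^ 2) := Real.sqrt_le_sqrt hx
        _ = Real.sqrt 2 * |c| := by
            rw [Real.sqrt_mul (by norm_num), Real.sqrt_sq_eq_abs]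
    have h1 : |(u j).1 - (u (j+1)).1| ≤ Real.sqrt 2 * |c| :=
      habs _ (by nlinarith [sq_nonneg ((u j).2 - (u (j+1)).2)])
    have h2 : |(u j).2 - (u (j+1)).2| ≤ Real.sqrt 2 * |c| :=
      habs _ (by nlinarith [sq_nonneg ((u j).1 - (u (j+1)).1)])
    have hdist : dist (u j) (u (j + 1)) ≤ Real.sqrt 2 * |c| := by
      rw [Prod.dist_eq]
      exact max_le (by rw [Real.dist_eq]; exact h1) (by rw [Real.dist_eq]; exact h2)
    -- |c| ≤ |cross w|
    have hcle : |c| ≤ |crossP (w j) (w (j + 1))| := by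
      rw [hcu, abs_mul]
      have h1 : |r⁻¹ * s⁻¹| ≤ 1 := by
        rw [abs_mul, abs_inv, abs_inv, abs_of_pos (hrpos j), abs_of_pos (hrpos (j+1))]
        have ha : r⁻¹ ≤ 1 := inv_le_one_of_one_le₀ (hr1 j)
        have hb : s⁻¹ ≤ 1 := inv_le_one_of_one_le₀ (hr1 (j + 1))
        nlinarith [inv_pos.2 (hrpos j), inv_pos.2 (hrpos (j + 1))]
      calc |r⁻¹ * s⁻¹| * |crossP (w j) (w (j + 1))|
          ≤ 1 * |crossP (w j) (w (j + 1))| := by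
            apply mul_le_mul_of_nonneg_right h1 (abs_nonneg _)
        _ = _ := one_mul _
    calc dist (u j) (u (j + 1)) ≤ Real.sqrt 2 * |c| := hdist
      _ ≤ Real.sqrt 2 * |crossP (w j) (w (j + 1))| := by
          apply mul_le_mul_of_nonneg_left hcle (Real.sqrt_nonneg 2)
  have hsum2 : Summable (fun j => dist (u j) (u (j + 1))) := by
    apply Summable.of_nonneg_of_le (fun j => dist_nonneg) hbound
    exact hsum.mul_left _
  have hcauchy : CauchySeq u := cauchySeq_of_summable_dist hsum2
  exact cauchySeq_tendsto_of_complete hcauchy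
end
end

section
/- Fix an integer g ≥ 2, a constant C ≥ 1, (x₀,y₀) ∈ ℝ² with 1, x₀, y₀ linearly independent over ℚ, and a sequence (δ_j)_{j≥0} of positive reals with liminf_{j→∞} j·δ_j > 2 and limsup_{j→∞} j·δ_j < ∞. Then for every ε > 0 there exists L₀ = L₀(ε) such that every admissible sequence (w_j)_{j≥0} with |w₀| ≥ L₀ satisfies sup_{j≥0} (log|w_j|)² / |w_j|^{δ_j δ_{j+1}} ≤ ε. -/
open Pointwise

noncomputable section

/-- The set `W = ±(x₀,y₀) + ℤ²`. -/
def Wset (x₀ y₀ : ℝ) : Set (ℝ × ℝ) :=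
  {w | ∃ m n : ℤ, w = (x₀ + m, y₀ + n) ∨ w = (-x₀ + m, -y₀ + n)}

/-- The set `V = W ∪ Z` of holonomy vectors of saddle connections. -/
def Vset (x₀ y₀ : ℝ) : Set (ℝ × ℝ) := Wset x₀ y₀ ∪ Zset

/-- `1, x₀, y₀` are linearly independent over `ℚ`. -/
def QLinIndep (x₀ y₀ : ℝ) : Prop :=
  ∀ a b c : ℚ, (a : ℝ) * x₀ + (b : ℝ) * y₀ + (c : ℝ) = 0 → a = 0 ∧ b = 0 ∧ c = 0

/-- `w'` is a child of `w` at stage `j` (with parameters `g`, `C`, `δj`):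
`|w|^{1+δ_j} ≤ |w'| ≤ C|w|^{1+δ_j}`, `C⁻¹/log|w| ≤ |w×w'| ≤ C/log|w|`, and
`w' = w + g v'` for some `v' ∈ Z` with `|v'| > |w|` and `w·v' > 0`. -/
def IsChild (g : ℕ) (C : ℝ) (x₀ y₀ : ℝ) (δj : ℝ) (w w' : ℝ × ℝ) : Prop :=
  w' ∈ Wset x₀ y₀ ∧
  nrm w ^ (1 + δj) ≤ nrm w' ∧ nrm w' ≤ C * nrm w ^ (1 + δj) ∧
  C⁻¹ / Real.log (nrm w) ≤ |crossP w w'| ∧ |crossP w w'| ≤ C / Real.log (nrm w) ∧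
  ∃ v' ∈ Zset, nrm w < nrm v' ∧ 0 < dotP w v' ∧ w' = w + (g : ℝ) • v'

/-- `(w_0, …, w_j)` is an admissible sequence: `|w₀| > 1`, `w₀ ∈ ±(x₀,y₀)+gℤ²`,
and `w_{i+1}` is a child of `w_i` at stage `i` for all `i < j`. -/
def AdmissibleUpTo (g : ℕ) (C : ℝ) (x₀ y₀ : ℝ) (δ : ℕ → ℝ)
    (w : ℕ → ℝ × ℝ) (j : ℕ) : Prop :=
  (∀ i ≤ j, w i ∈ Wset x₀ y₀) ∧ 1 < nrm (w 0) ∧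
  (∃ m n : ℤ, w 0 = (x₀ + (g : ℝ) * m, y₀ + (g : ℝ) * n) ∨
    w 0 = (-x₀ + (g : ℝ) * m, -y₀ + (g : ℝ) * n)) ∧
  ∀ i < j, IsChild g C x₀ y₀ (δ i) (w i) (w (i + 1))

/-- An (infinite) admissible sequence. -/
def AdmissibleSeq (g : ℕ) (C : ℝ) (x₀ y₀ : ℝ) (δ : ℕ → ℝ) (w : ℕ → ℝ × ℝ) : Prop :=
  ∀ j : ℕ, AdmissibleUpTo g C x₀ y₀ δ w j

/-!
Write `t_j = log |w_j|` and `P_j = ∏_{i<j} (1 + δ_i)`. The growth `|w_{j+1}| ≥ |w_j|^{1+δ_j}`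
gives `t_j ≥ t_0 P_j`, and the quotient to bound is `t_j² e^{-d_j t_j}` with `d_j = δ_j δ_{j+1}`.
Since `δ_j ≥ c/j` eventually with `c > 2`, `P_j` grows at least like `j^{c'}` for some `c' > 2`,
while `d_j ≥ 1/j²`; so for `m` with `2(m+2) < c m` the product `P_j^m d_j^{m+2}` is bounded below
by some `κ > 0` uniformly in `j`. By `e^x ≥ x^{m+2}/(m+2)!` the quotient is then at most
`(m+2)! / (t_j^m d_j^{m+2}) ≤ (m+2)! / (κ t_0^m)`, which is small once `|w_0|` is large.
-/

open Real Filter Finset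
open scoped Nat

lemma eventually_exp_div_le_one_add_div {a b : ℝ} (hab : a < b) :
    ∀ᶠ n : ℕ in atTop, exp (a / n) ≤ 1 + b / n := by
  filter_upwards [(tendsto_natCast_atTop_atTop (R := ℝ)).eventually_ge_atTop
    (max 1 (max |a| (a ^ 2 / (b - a))))] with n hn
  simp only [max_le_iff] at hn
  obtain ⟨hn1, hna, hnab⟩ := hn
  have hn0 : (0 : ℝ) < n := by linarith
  have hsmall : |a / n| ≤ 1 := by
    rwa [abs_div, Nat.abs_cast, div_le_one hn0]
  have hsq : (a / n) ^ 2 ≤ b / n - a / n := by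
    rw [div_pow, ← sub_div, div_le_div_iff₀ (by positivity) hn0, sq (n : ℝ), ← mul_assoc]
    exact mul_le_mul_of_nonneg_right
      (((div_le_iff₀ (by linarith)).1 hnab).trans_eq (mul_comm _ _)) hn0.le
  linarith [(abs_le.1 (abs_exp_sub_one_sub_id_le hsmall)).2]

lemma exists_pos_forall_le_of_forall_ge {u : ℕ → ℝ} (hu : ∀ n, 0 < u n) {κ : ℝ}
    (hκ : 0 < κ) {N : ℕ} (hN : ∀ n ≥ N, κ ≤ u n) : ∃ κ' > 0, ∀ n, κ' ≤ u n := by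
  induction N generalizing κ with
  | zero => exact ⟨κ, hκ, fun n => hN n n.zero_le⟩
  | succ N ih =>
    refine ih (lt_min hκ (hu N)) fun n hn => ?_
    rcases hn.eq_or_lt with rfl | hlt
    · exact min_le_right _ _
    · exact (min_le_left _ _).trans (hN n hlt)

section GrowthProduct

variable {δ : ℕ → ℝ}

lemma eventually_one_add_inv_pow_le {c : ℝ} (hcδ : ∀ᶠ n : ℕ in atTop, c ≤ n * δ n)
    {m : ℕ} (hm : 2 * (m + 2) < c * m) :
    ∀ᶠ n : ℕ in atTop, (1 + 1 / (n : ℝ)) ^ (2 * (m + 2)) ≤ (1 + δ n) ^ m := by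
  have hm0 : (0 : ℝ) < m :=
    Nat.cast_pos.2 (Nat.pos_of_ne_zero (by rintro rfl; norm_num at hm))
  have hc : 0 < c := by nlinarith
  have ha : 2 * (m + 2) / m < c := by rwa [div_lt_iff₀ hm0]
  filter_upwards [eventually_exp_div_le_one_add_div ha, hcδ, eventually_gt_atTop 0]
    with n hexp hcn hn
  have hn0 : (0 : ℝ) < n := by exact_mod_cast hn
  calc (1 + 1 / (n : ℝ)) ^ (2 * (m + 2))
      ≤ exp (1 / n) ^ (2 * (m + 2)) :=
        pow_le_pow_left₀ (by positivity) (by linarith [add_one_le_exp (1 / (n : ℝ))]) _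
    _ = exp (2 * (m + 2) / m / n) ^ m := by
        rw [← exp_nat_mul, ← exp_nat_mul]
        congr 1
        push_cast
        field_simp
    _ ≤ (1 + c / n) ^ m := pow_le_pow_left₀ (exp_pos _).le hexp _
    _ ≤ (1 + δ n) ^ m := by
        gcongr
        rwa [div_le_iff₀ hn0, mul_comm]

lemma prod_pow_mul_pow_le (hδ : ∀ n, 0 < δ n) {k m N : ℕ} (hN : 0 < N)
    (h : ∀ n ≥ N, (1 + 1 / (n : ℝ)) ^ k ≤ (1 + δ n) ^ m) (n : ℕ) (hn : N ≤ n) :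
    (∏ i ∈ range N, (1 + δ i)) ^ m * (n : ℝ) ^ k
      ≤ (∏ i ∈ range n, (1 + δ i)) ^ m * (N : ℝ) ^ k := by
  induction n, hn using Nat.le_induction with
  | base => rfl
  | succ n hn ih =>
    have hn0 : (0 : ℝ) < n := by exact_mod_cast hN.trans_le hn
    have hP : 0 ≤ ∏ i ∈ range n, (1 + δ i) := prod_nonneg fun i _ => by linarith [hδ i]
    calc (∏ i ∈ range N, (1 + δ i)) ^ m * ((n + 1 : ℕ) : ℝ) ^ k
        = (∏ i ∈ range N, (1 + δ i)) ^ m * (n : ℝ) ^ k * (1 + 1 / (n : ℝ)) ^ k := by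
          rw [mul_assoc, ← mul_pow]
          congr 2
          field_simp
          push_cast
          ring
      _ ≤ (∏ i ∈ range n, (1 + δ i)) ^ m * (N : ℝ) ^ k * (1 + δ n) ^ m :=
          mul_le_mul ih (h n hn) (by positivity) (by positivity)
      _ = (∏ i ∈ range (n + 1), (1 + δ i)) ^ m * (N : ℝ) ^ k := by
          rw [prod_range_succ, mul_pow]
          ring

lemma exists_pos_le_prod_pow_mul_pow (hδ : ∀ n, 0 < δ n)
    (hliminf : ∃ c : ℝ, 2 < c ∧ ∀ᶠ n : ℕ in atTop, c ≤ n * δ n) :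
    ∃ m : ℕ, 0 < m ∧ ∃ κ > 0, ∀ n,
      κ ≤ (∏ i ∈ range n, (1 + δ i)) ^ m * (δ n * δ (n + 1)) ^ (m + 2) := by
  obtain ⟨c, hc, hcδ⟩ := hliminf
  obtain ⟨m, hm⟩ : ∃ m : ℕ, 4 / (c - 2) < m := exists_nat_gt _
  have hmc : 2 * (m + 2) < c * m := by
    have := (div_lt_iff₀ (by linarith)).1 hm
    linarith
  obtain ⟨N, hN⟩ := eventually_atTop.1
    ((hcδ.and (eventually_one_add_inv_pow_le hcδ hmc)).and (eventually_gt_atTop 0))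
  have hN0 : 0 < N := (hN N le_rfl).2
  have hP : ∀ n, 0 < ∏ i ∈ range n, (1 + δ i) :=
    fun n => prod_pos fun i _ => by linarith [hδ i]
  have hd : ∀ n, 0 < δ n * δ (n + 1) := fun n => mul_pos (hδ n) (hδ (n + 1))
  have hκ : 0 < (∏ i ∈ range N, (1 + δ i)) ^ m / (N : ℝ) ^ (2 * (m + 2)) :=
    div_pos (pow_pos (hP N) m) (by positivity)
  refine ⟨m, Nat.pos_of_ne_zero (by rintro rfl; norm_num at hmc),
    exists_pos_forall_le_of_forall_ge (fun n => mul_pos (pow_pos (hP n) m) (pow_pos (hd n) _))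
      hκ (N := N) fun n hn => ?_⟩
  have hgrowth := prod_pow_mul_pow_le hδ hN0 (fun n hn => (hN n hn).1.2) n hn
  have hdn : 1 ≤ (n : ℝ) ^ 2 * (δ n * δ (n + 1)) := by
    have hn1 : (1 : ℝ) ≤ n := by exact_mod_cast hN0.trans_le hn
    have h1 := (hN n hn).1.1
    have h2 := (hN (n + 1) (hn.trans n.le_succ)).1.1
    push_cast at h2
    have h3 : 1 ≤ (n : ℝ) * δ (n + 1) := by nlinarith [hδ (n + 1)]
    nlinarith
  calc (∏ i ∈ range N, (1 + δ i)) ^ m / (N : ℝ) ^ (2 * (m + 2))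
      ≤ (∏ i ∈ range N, (1 + δ i)) ^ m / (N : ℝ) ^ (2 * (m + 2))
          * ((n : ℝ) ^ 2 * (δ n * δ (n + 1))) ^ (m + 2) :=
        le_mul_of_one_le_right hκ.le (one_le_pow₀ hdn)
    _ = (∏ i ∈ range N, (1 + δ i)) ^ m * (n : ℝ) ^ (2 * (m + 2)) / (N : ℝ) ^ (2 * (m + 2))
          * (δ n * δ (n + 1)) ^ (m + 2) := by ring
    _ ≤ (∏ i ∈ range n, (1 + δ i)) ^ m * (δ n * δ (n + 1)) ^ (m + 2) :=
        mul_le_mul_of_nonneg_right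
          (div_le_of_le_mul₀ (by positivity) (pow_pos (hP n) m).le hgrowth) (pow_pos (hd n) _).le

lemma AdmissibleSeq.log_nrm_mul_prod_le {g : ℕ} {C x₀ y₀ : ℝ} {w : ℕ → ℝ × ℝ}
    (hw : AdmissibleSeq g C x₀ y₀ δ w) (hδ : ∀ n, 0 < δ n) (n : ℕ) :
    log (nrm (w 0)) * ∏ i ∈ range n, (1 + δ i) ≤ log (nrm (w n)) := by
  have h0 : 0 < log (nrm (w 0)) := log_pos (hw 0).2.1
  induction n with
  | zero => simp
  | succ n ih =>
    have hpos : 0 < nrm (w n) := by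
      have : 0 < log (nrm (w n)) :=
        (mul_pos h0 (prod_pos fun i _ => by linarith [hδ i])).trans_le ih
      exact zero_lt_one.trans ((log_pos_iff (sqrt_nonneg _)).1 this)
    have hgrowth := ((hw (n + 1)).2.2.2 n n.lt_succ_self).2.1
    calc log (nrm (w 0)) * ∏ i ∈ range (n + 1), (1 + δ i)
        = (1 + δ n) * (log (nrm (w 0)) * ∏ i ∈ range n, (1 + δ i)) := by
          rw [prod_range_succ]; ring
      _ ≤ (1 + δ n) * log (nrm (w n)) := mul_le_mul_of_nonneg_left ih (by linarith [hδ n])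
      _ = log (nrm (w n) ^ (1 + δ n)) := (log_rpow hpos _).symm
      _ ≤ log (nrm (w (n + 1))) := log_le_log (rpow_pos_of_pos hpos _) hgrowth

end GrowthProduct

lemma sq_le_mul_exp_of_factorial_le {ε d t : ℝ} (m : ℕ) (hε : 0 ≤ ε) (hd : 0 ≤ d)
    (ht : 0 ≤ t) (h : ((m + 2)! : ℝ) ≤ ε * d ^ (m + 2) * t ^ m) :
    t ^ 2 ≤ ε * exp (d * t) := by
  have hexp := (div_le_iff₀ (by positivity)).1
    (pow_div_factorial_le_exp (d * t) (by positivity) (m + 2))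
  refine le_of_mul_le_mul_right ?_ (by positivity : (0 : ℝ) < (m + 2)!)
  calc t ^ 2 * (m + 2)! ≤ t ^ 2 * (ε * d ^ (m + 2) * t ^ m) :=
        mul_le_mul_of_nonneg_left h (sq_nonneg t)
    _ = ε * (d * t) ^ (m + 2) := by ring
    _ ≤ ε * (exp (d * t) * (m + 2)!) := mul_le_mul_of_nonneg_left hexp hε
    _ = ε * exp (d * t) * (m + 2)! := by ring

theorem slowly_divergent_eps_general
    (g : ℕ) (C : ℝ)
    (x₀ y₀ : ℝ)
    (δ : ℕ → ℝ) (hδ : ∀ j, 0 < δ j)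
    (hliminf : ∃ c : ℝ, 2 < c ∧ ∀ᶠ (j : ℕ) in Filter.atTop, c ≤ (j : ℝ) * δ j) :
    ∀ ε : ℝ, 0 < ε → ∃ L₀ : ℝ,
      ∀ w : ℕ → ℝ × ℝ, AdmissibleSeq g C x₀ y₀ δ w → L₀ ≤ nrm (w 0) →
        ∀ j : ℕ,
          (Real.log (nrm (w j))) ^ 2 / nrm (w j) ^ (δ j * δ (j + 1)) ≤ ε := by
  intro ε hε
  obtain ⟨m, hm, κ, hκ, hbound⟩ := exists_pos_le_prod_pow_mul_pow hδ hliminf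
  set T := max 1 ((m + 2)! / (ε * κ))
  have hT1 : 1 ≤ T := le_max_left _ _
  refine ⟨exp T, fun w hw hw₀ j => ?_⟩
  set P := ∏ i ∈ range j, (1 + δ i)
  set t := log (nrm (w j))
  set d := δ j * δ (j + 1)
  have hd : 0 < d := mul_pos (hδ j) (hδ (j + 1))
  have hP : 1 ≤ P := one_le_prod fun i _ => by linarith [hδ i]
  have ht : T * P ≤ t := by
    have hT : T ≤ log (nrm (w 0)) := (le_log_iff_exp_le ((exp_pos T).trans_le hw₀)).2 hw₀
    exact (mul_le_mul_of_nonneg_right hT (by linarith)).trans (hw.log_nrm_mul_prod_le hδ j)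
  have ht1 : 1 ≤ t := by nlinarith
  have hnrm : 0 < nrm (w j) :=
    zero_lt_one.trans ((log_pos_iff (sqrt_nonneg _)).1 (show 0 < t by linarith))
  rw [rpow_def_of_pos hnrm, div_le_iff₀ (exp_pos _), mul_comm t]
  refine sq_le_mul_exp_of_factorial_le m hε.le hd.le (by linarith) ?_
  calc ((m + 2)! : ℝ) ≤ ε * κ * T := by
        rw [mul_comm, ← div_le_iff₀ (by positivity)]; exact le_max_right _ _
    _ ≤ ε * (P ^ m * d ^ (m + 2)) * T ^ m := by
        gcongr
        exacts [hbound j, le_self_pow₀ hT1 hm.ne']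
    _ = ε * d ^ (m + 2) * (T * P) ^ m := by ring
    _ ≤ ε * d ^ (m + 2) * t ^ m := by gcongr

/-- Lemma "eps".  If `liminf j δ_j > 2` and `limsup j δ_j < ∞`, then
for every `ε > 0` there is `L₀` such that every admissible sequence with
`|w₀| ≥ L₀` satisfies `sup_j (log|w_j|)²/|w_j|^{δ_j δ_{j+1}} ≤ ε`. -/
theorem slowly_divergent_eps
    (g : ℕ) (hg : 2 ≤ g) (C : ℝ) (hC : 1 ≤ C)
    (x₀ y₀ : ℝ) (hind : QLinIndep x₀ y₀)
    (δ : ℕ → ℝ) (hδ : ∀ j, 0 < δ j)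
    (hliminf : ∃ c : ℝ, 2 < c ∧ ∀ᶠ (j : ℕ) in Filter.atTop, c ≤ (j : ℝ) * δ j)
    (hlimsup : ∃ B : ℝ, ∀ᶠ (j : ℕ) in Filter.atTop, (j : ℝ) * δ j ≤ B) :
    ∀ ε : ℝ, 0 < ε → ∃ L₀ : ℝ,
      ∀ w : ℕ → ℝ × ℝ, AdmissibleSeq g C x₀ y₀ δ w → L₀ ≤ nrm (w 0) →
        ∀ j : ℕ,
          (Real.log (nrm (w j))) ^ 2 / nrm (w j) ^ (δ j * δ (j + 1)) ≤ ε :=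
  slowly_divergent_eps_general g C x₀ y₀ δ hδ hliminf
end
end

section
/- Suppose (x₀,y₀) ∈ ℝ² satisfies a Diophantine condition with constants c₀ > 0 and d₀ > 0, and let e₀ > max(d₀,2). Then there exists L₀ > 0 such that for every w = (w₁,w₂) ∈ W with w₂ > 0 and |w| ≥ L₀, and every t ≥ e₀, there is a continued fraction convergent vector v of α := w₁/w₂ whose Euclidean length satisfies e^{t}|w|log|w| ≤ |v| ≤ |w|^{1+t}. -/
/-!
Put `α = w₁/w₂` and `A = eᵗ|w| log|w|`, and let `v_k = (p_k, q_k)` be the first convergent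
vector with `|v_k| ≥ A`. For `w ∈ W` the Diophantine condition reads
`|w × (p, q)| > c₀ / max(|p|, |q|)^d₀` for every nonzero integer vector; in particular `α` is
irrational and `w₂ > c₀`. Either `k = 0` and `q_k = 1 < w₂ / c₀`, or the previous convergent
vector is shorter than `A` and `|w × v_{k-1}| = w₂ |q_{k-1} α - p_{k-1}| ≤ w₂ / q_k`. Both give
`q_k ≤ w₂ A^d₀ / c₀`, hence `|v_k| ≤ (|α| + 2) q_k ≤ 3 |w| A^d₀ / c₀`, which is at most
`|w|^(1+t)` for large `|w|` because `e₀ > d₀`.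
-/

open Pointwise

noncomputable section

/-- `(x₀,y₀)` satisfies a Diophantine condition with constants `c₀, d₀`. -/
def DioCond (x₀ y₀ c₀ d₀ : ℝ) : Prop :=
  ∀ m n : ℤ, ¬(m = 0 ∧ n = 0) → ∀ l : ℤ,
    c₀ / (max |(m : ℝ)| |(n : ℝ)|) ^ d₀ < |(m : ℝ) * x₀ + (n : ℝ) * y₀ + (l : ℝ)|

open Filter
open GenContFract (of)

lemma abs_fst_le_nrm (u : ℝ × ℝ) : |u.1| ≤ nrm u := by
  rw [nrm, ← Real.sqrt_sq_eq_abs]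
  exact Real.sqrt_le_sqrt (by nlinarith [sq_nonneg u.2])

lemma abs_snd_le_nrm (u : ℝ × ℝ) : |u.2| ≤ nrm u := by
  rw [nrm, ← Real.sqrt_sq_eq_abs]
  exact Real.sqrt_le_sqrt (by nlinarith [sq_nonneg u.1])

lemma nrm_le_abs_add_abs (u : ℝ × ℝ) : nrm u ≤ |u.1| + |u.2| := by
  rw [nrm, Real.sqrt_le_left (by positivity)]
  nlinarith [sq_abs u.1, sq_abs u.2, mul_nonneg (abs_nonneg u.1) (abs_nonneg u.2)]

namespace GenContFract

variable {K : Type*} [Field K] [LinearOrder K] [FloorRing K]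

theorem exists_int_contsAux_eq (v : K) : ∀ n, ∃ a b : ℤ, (of v).contsAux n = ⟨a, b⟩
  | 0 => ⟨1, 0, by simp [zeroth_contAux_eq_one_zero]⟩
  | 1 => ⟨⌊v⌋, 1, by simp [first_contAux_eq_h_one, of_h_eq_floor]⟩
  | n + 2 => by
    obtain ⟨a₀, b₀, h₀⟩ := exists_int_contsAux_eq v n
    obtain ⟨a₁, b₁, h₁⟩ := exists_int_contsAux_eq v (n + 1)
    cases hs : (of v).s.get? n with
    | none => exact contsAux_stable_step_of_terminated hs ▸ ⟨a₁, b₁, h₁⟩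
    | some gp =>
      obtain ⟨ha, z, hb⟩ := of_partNum_eq_one_and_exists_int_partDen_eq hs
      refine ⟨z * a₁ + a₀, z * b₁ + b₀, ?_⟩
      rw [contsAux_recurrence hs h₀ h₁, ha, hb]
      push_cast
      ring_nf

variable [IsStrictOrderedRing K]

theorem one_le_dens (v : K) (n : ℕ) : 1 ≤ (of v).dens n :=
  zeroth_den_eq_one (g := of v) ▸
    monotone_nat_of_le_succ (fun m => of_den_mono (v := v) (n := m)) (Nat.zero_le n)

theorem exists_le_dens [Archimedean K] {v : K} (hv : ∀ n, ¬(of v).TerminatedAt n) (A : K) :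
    ∃ n, A ≤ (of v).dens n := by
  obtain ⟨n, hn⟩ := exists_nat_ge A
  refine ⟨n + 5, hn.trans ?_⟩
  have hfib : n + 5 ≤ Nat.fib (n + 5 + 1) :=
    (Nat.le_fib_self (by omega)).trans Nat.fib_le_fib_succ
  calc (n : K) ≤ (Nat.fib (n + 5 + 1) : K) := by exact_mod_cast (by omega : n ≤ _)
    _ ≤ (of v).dens (n + 5) :=
      succ_nth_fib_le_of_nth_den (Or.inr (hv _))

theorem abs_den_mul_sub_num_le {v : K} {n : ℕ} (hv : ¬(of v).TerminatedAt n) :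
    |(of v).dens n * v - (of v).nums n| ≤ 1 / (of v).dens (n + 1) := by
  have hq : 0 < (of v).dens n := zero_lt_one.trans_le (one_le_dens v n)
  have hq' : 0 < (of v).dens (n + 1) := zero_lt_one.trans_le (one_le_dens v (n + 1))
  calc |(of v).dens n * v - (of v).nums n|
      = (of v).dens n * |v - (of v).convs n| := by
        rw [conv_eq_num_div_den, ← abs_of_pos hq, ← abs_mul, abs_of_pos hq, mul_sub,
          mul_div_cancel₀ _ hq.ne']
    _ ≤ (of v).dens n * (1 / ((of v).dens n * (of v).dens (n + 1))) := by
        gcongr; exact abs_sub_convs_le hv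
    _ = 1 / (of v).dens (n + 1) := by field_simp

end GenContFract

lemma exists_int_convVec_eq (α : ℝ) (k : ℕ) :
    ∃ p q : ℤ, convVec α k = ((p : ℝ), (q : ℝ)) := by
  obtain ⟨p, q, h⟩ := GenContFract.exists_int_contsAux_eq α (k + 1)
  refine ⟨p, q, ?_⟩
  simp only [convVec, GenContFract.num_eq_conts_a, GenContFract.den_eq_conts_b,
    GenContFract.nth_cont_eq_succ_nth_contAux, h]

lemma Irrational.not_terminatedAt {α : ℝ} (hα : Irrational α) (n : ℕ) :
    ¬(of α).TerminatedAt n :=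
  fun h => hα (((GenContFract.terminates_iff_rat α).1 ⟨n, h⟩).imp fun _ hq => hq.symm)

lemma Irrational.nrm_convVec_le {α : ℝ} (hα : Irrational α) (k : ℕ) :
    nrm (convVec α k) ≤ (|α| + 2) * (of α).dens k := by
  have hq := GenContFract.one_le_dens α k
  have happrox : |(of α).dens k * α - (of α).nums k| ≤ 1 :=
    (GenContFract.abs_den_mul_sub_num_le (hα.not_terminatedAt k)).trans
      (div_le_one_of_le₀ (GenContFract.one_le_dens α (k + 1)) GenContFract.zero_le_of_den)
  have hp : |(of α).nums k| ≤ |α| * (of α).dens k + 1 := by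
    have := abs_sub_abs_le_abs_sub ((of α).nums k) ((of α).dens k * α)
    rw [abs_sub_comm, abs_mul, abs_of_pos (zero_lt_one.trans_le hq)] at this
    linarith
  calc nrm (convVec α k) ≤ |(of α).nums k| + |(of α).dens k| := nrm_le_abs_add_abs _
    _ ≤ (|α| + 2) * (of α).dens k := by
      rw [abs_of_pos (zero_lt_one.trans_le hq)]; nlinarith

lemma abs_crossP_convVec_le {w : ℝ × ℝ} (hw : 0 < w.2) (hα : Irrational (w.1 / w.2))
    {p q : ℤ} (j : ℕ)
    (hpq : convVec (w.1 / w.2) j = ((p : ℝ), (q : ℝ))) :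
    |crossP w (p, q)| ≤ w.2 / (of (w.1 / w.2)).dens (j + 1) := by
  simp only [convVec, Prod.ext_iff] at hpq
  have h := GenContFract.abs_den_mul_sub_num_le (hα.not_terminatedAt j)
  rw [hpq.1, hpq.2] at h
  calc |crossP w (p, q)| = w.2 * |q * (w.1 / w.2) - p| := by
        rw [← abs_of_pos hw, ← abs_mul, abs_of_pos hw, crossP]; congr 1; field_simp
    _ ≤ w.2 * (1 / (of (w.1 / w.2)).dens (j + 1)) := by gcongr
    _ = _ := mul_one_div _ _

def CrossDioCond (c d : ℝ) (w : ℝ × ℝ) : Prop :=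
  ∀ p q : ℤ, ¬(p = 0 ∧ q = 0) → c / (max |(p : ℝ)| |(q : ℝ)|) ^ d < |crossP w (p, q)|

lemma DioCond.crossDioCond {x₀ y₀ c₀ d₀ : ℝ} (hdio : DioCond x₀ y₀ c₀ d₀) {w : ℝ × ℝ}
    (hw : w ∈ Wset x₀ y₀) : CrossDioCond c₀ d₀ w := by
  intro p q hpq
  obtain ⟨m, n, rfl | rfl⟩ := hw
  · have h := hdio q (-p) (by omega) (m * q - n * p)
    rw [Int.cast_neg, abs_neg, max_comm] at h
    convert h using 2
    simp only [crossP]; push_cast; ring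
  · have h := hdio (-q) p (by omega) (m * q - n * p)
    rw [Int.cast_neg, abs_neg, max_comm] at h
    convert h using 2
    simp only [crossP]; push_cast; ring

namespace CrossDioCond

variable {c d : ℝ} {w : ℝ × ℝ}

lemma lt_abs_snd (h : CrossDioCond c d w) : c < |w.2| := by
  simpa [crossP] using h (-1) 0 (by norm_num)

lemma irrational_div (h : CrossDioCond c d w) (hc : 0 ≤ c) (hw : w.2 ≠ 0) :
    Irrational (w.1 / w.2) := by
  rintro ⟨r, hr⟩
  have hden : (r.den : ℝ) ≠ 0 := Nat.cast_ne_zero.2 r.den_nz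
  have hcross : crossP w (r.num, (r.den : ℤ)) = 0 := by
    rw [Rat.cast_def, eq_div_iff hw, div_mul_eq_mul_div, div_eq_iff hden] at hr
    simp only [crossP]; push_cast; linarith
  have h := h r.num r.den (by rintro ⟨-, h⟩; exact r.den_nz (by exact_mod_cast h))
  rw [hcross, abs_zero] at h
  exact h.not_ge (div_nonneg hc (Real.rpow_nonneg (le_max_of_le_right (abs_nonneg _)) _))

lemma dens_le (h : CrossDioCond c d w) (hc : 0 < c) (hd : 0 ≤ d) (hw : 0 < w.2) {A : ℝ}
    (hA : 1 ≤ A) {k : ℕ} (hk : ∀ j < k, nrm (convVec (w.1 / w.2) j) < A) :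
    (of (w.1 / w.2)).dens k ≤ w.2 * A ^ d / c := by
  have hAd : 1 ≤ A ^ d := Real.one_le_rpow hA hd
  rw [le_div_iff₀ hc]
  cases k with
  | zero =>
    have hcw := h.lt_abs_snd
    rw [abs_of_pos hw] at hcw
    rw [GenContFract.zeroth_den_eq_one]
    nlinarith
  | succ j =>
    have hα := h.irrational_div hc.le hw.ne'
    obtain ⟨p, q, hpq⟩ := exists_int_convVec_eq (w.1 / w.2) j
    have hq : (1 : ℝ) ≤ q := by
      have := GenContFract.one_le_dens (w.1 / w.2) j
      simp only [convVec, Prod.ext_iff] at hpq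
      rwa [hpq.2] at this
    have hMA : max |(p : ℝ)| |(q : ℝ)| < A := by
      have hj := hpq ▸ hk j j.lt_succ_self
      exact max_lt ((abs_fst_le_nrm _).trans_lt hj) ((abs_snd_le_nrm _).trans_lt hj)
    have hM : 0 < max |(p : ℝ)| |(q : ℝ)| :=
      zero_lt_one.trans_le (hq.trans ((le_abs_self _).trans (le_max_right _ _)))
    have hD : 0 < (of (w.1 / w.2)).dens (j + 1) :=
      zero_lt_one.trans_le (GenContFract.one_le_dens _ _)
    have hlt : c / A ^ d < w.2 / (of (w.1 / w.2)).dens (j + 1) :=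
      calc c / A ^ d ≤ c / (max |(p : ℝ)| |(q : ℝ)|) ^ d := by gcongr
        _ < |crossP w (p, q)| := h p q (by rintro ⟨-, rfl⟩; norm_num at hq)
        _ ≤ _ := abs_crossP_convVec_le hw hα j hpq
    rw [div_lt_div_iff₀ (by positivity) hD] at hlt
    linarith

lemma exists_convVec_between (h : CrossDioCond c d w) (hc : 0 < c) (hd : 0 ≤ d) (hw : 0 < w.2)
    {A : ℝ} (hA : 1 ≤ A) :
    ∃ k, A ≤ nrm (convVec (w.1 / w.2) k) ∧
      nrm (convVec (w.1 / w.2) k) ≤ 3 / c * nrm w * A ^ d := by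
  classical
  have hα := h.irrational_div hc.le hw.ne'
  have hex : ∃ k, A ≤ nrm (convVec (w.1 / w.2) k) := by
    obtain ⟨k, hk⟩ := GenContFract.exists_le_dens hα.not_terminatedAt A
    exact ⟨k, hk.trans (le_of_eq_of_le (abs_of_nonneg GenContFract.zero_le_of_den).symm
      (abs_snd_le_nrm (convVec _ k)))⟩
  refine ⟨Nat.find hex, Nat.find_spec hex, ?_⟩
  have hslope : |w.1 / w.2| + 2 ≤ 3 * nrm w / w.2 := by
    have h₂ : w.2 ≤ nrm w := (le_abs_self _).trans (abs_snd_le_nrm w)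
    rw [abs_div, abs_of_pos hw, div_add' _ _ _ hw.ne']
    gcongr
    linarith [abs_fst_le_nrm w]
  calc nrm (convVec (w.1 / w.2) (Nat.find hex))
      ≤ (|w.1 / w.2| + 2) * (of (w.1 / w.2)).dens (Nat.find hex) := hα.nrm_convVec_le _
    _ ≤ 3 * nrm w / w.2 * (w.2 * A ^ d / c) :=
      mul_le_mul hslope (h.dens_le hc hd hw hA fun j hj => not_le.1 (Nat.find_min hex hj))
        GenContFract.zero_le_of_den (div_nonneg (by unfold nrm; positivity) hw.le)
    _ = 3 / c * nrm w * A ^ d := by field_simp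

end CrossDioCond

/-- Taking logarithms with `y = log N`, this reads `log K + d t + d y + d log y ≤ t y`; since
`t (y - d) ≥ e (y - d)` it suffices that `(e - d) y` dominates `log K + e d + d log y`. -/
lemma eventually_mul_rpow_le {K d e : ℝ} (hK : 0 < K) (hde : d < e) :
    ∀ᶠ N in atTop, ∀ t, e ≤ t →
      K * N * (Real.exp t * N * Real.log N) ^ d ≤ N ^ (1 + t) := by
  have hε : 0 < (e - d) / 2 := by linarith
  have hlog : ∀ᶠ y in atTop, d * Real.log y ≤ (e - d) / 2 * y := by
    filter_upwards [(Real.isLittleO_log_id_atTop.const_mul_left d).bound hε,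
      eventually_ge_atTop 0] with y hy hy0
    rw [Real.norm_eq_abs, Real.norm_eq_abs, id, abs_of_nonneg hy0] at hy
    exact (le_abs_self _).trans hy
  have hlin : ∀ᶠ y in atTop, Real.log K + e * d ≤ (e - d) / 2 * y :=
    (tendsto_id.const_mul_atTop hε).eventually_ge_atTop _
  filter_upwards [Real.tendsto_log_atTop.eventually
      (hlog.and (hlin.and (eventually_ge_atTop (max d 1)))), eventually_gt_atTop 0]
    with N ⟨hlogy, hliny, hy⟩ hN t ht
  have hy1 : 0 < Real.log N := zero_lt_one.trans_le (le_of_max_le_right hy)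
  have hA : 0 < Real.exp t * N * Real.log N := by positivity
  rw [← Real.log_le_log_iff (by positivity) (by positivity), Real.log_mul (by positivity)
    (by positivity), Real.log_mul hK.ne' hN.ne', Real.log_rpow hA, Real.log_mul (by positivity)
    hy1.ne', Real.log_mul (by positivity) hN.ne', Real.log_exp, Real.log_rpow hN]
  nlinarith [mul_le_mul_of_nonneg_right ht (sub_nonneg.2 (le_of_max_le_left hy))]

/-- Lemma "DIO".  If `(x₀,y₀)` is Diophantine with exponent `d₀` and
`e₀ > max(d₀,2)`, there is `L₀ > 0` such that for every `w ∈ W` with `w₂ > 0`,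
`|w| ≥ L₀`, and every `t ≥ e₀`, some convergent vector `v` of `α = w₁/w₂` satisfies
`e^t |w| log|w| ≤ |v| ≤ |w|^{1+t}`. -/
theorem slowly_divergent_dio
    (x₀ y₀ c₀ d₀ : ℝ) (hc₀ : 0 < c₀) (hd₀ : 0 < d₀)
    (hdio : DioCond x₀ y₀ c₀ d₀) (e₀ : ℝ) (he₀ : max d₀ 2 < e₀) :
    ∃ L₀ : ℝ, 0 < L₀ ∧
      ∀ w ∈ Wset x₀ y₀, 0 < w.2 → L₀ ≤ nrm w →
        ∀ t : ℝ, e₀ ≤ t →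
          ∃ k : ℕ,
            Real.exp t * nrm w * Real.log (nrm w) ≤ nrm (convVec (w.1 / w.2) k) ∧
            nrm (convVec (w.1 / w.2) k) ≤ nrm w ^ (1 + t) := by
  obtain ⟨N₀, hN₀⟩ := eventually_atTop.1 <|
    eventually_mul_rpow_le (K := 3 / c₀) (by positivity) (le_max_left d₀ 2 |>.trans_lt he₀)
  refine ⟨max N₀ (Real.exp 1), by positivity, fun w hw hw₂ hL t ht => ?_⟩
  have hexp : Real.exp 1 ≤ nrm w := (le_max_right _ _).trans hL
  have hlog : 1 ≤ Real.log (nrm w) :=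
    (Real.le_log_iff_exp_le ((Real.exp_pos 1).trans_le hexp)).2 hexp
  have hA : 1 ≤ Real.exp t * nrm w * Real.log (nrm w) := by
    refine one_le_mul_of_one_le_of_one_le (one_le_mul_of_one_le_of_one_le ?_ ?_) hlog
    · exact Real.one_le_exp (by linarith [le_max_right d₀ 2])
    · linarith [Real.add_one_le_exp 1]
  obtain ⟨k, hk_ge, hk_le⟩ := (hdio.crossDioCond hw).exists_convVec_between hc₀ hd₀.le hw₂ hA
  exact ⟨k, hk_ge, hk_le.trans (hN₀ _ (le_of_max_le_left hL) t ht)⟩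
end
end
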